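/- arXiv:1902.09012 — 7 statements merged into one kernel-verified Lean document; each statement's English description precedes it below -/
import Mathlib

section
/- Let a₁ be a nonzero real constant. The vector fields X₁, X₂, X₃ on ℝ⁷ satisfy the commutation relations [X₁, X₂] = 2·X₁, [X₁, X₃] = 0 and [X₂, X₃] = 0 (as equalities of maps ℝ⁷ → ℝ⁷). -/
noncomputable section

/-- ℝ⁷ with coordinates `(t,x,y,z,u,v,w)` indexed by `0,…,6`. -/
abbrev R7 : Type := Fin 7 → ℝ

/-- The Lie bracket of two vector fields `A B : R7 → R7`:
`[A,B](p) = DB(p)·A(p) − DA(p)·B(p)`. -/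
def bracket (A B : R7 → R7) : R7 → R7 :=
  fun p => fderiv ℝ B p (A p) - fderiv ℝ A p (B p)

/-- `X₁ = ∂t`. -/
def X1 : R7 → R7 := fun _ => ![1, 0, 0, 0, 0, 0, 0]

/-- `X₂ = 2t∂t + x∂x + y∂y + z∂z − u∂u − v∂v − 2w∂w`. -/
def X2 : R7 → R7 := fun p => ![2 * p 0, p 1, p 2, p 3, -p 4, -p 5, -2 * p 6]

/-- `X₃ = z∂x − x∂z`. -/
def X3 : R7 → R7 := fun p => ![0, p 3, 0, -p 1, 0, 0, 0]

/-- `Y(f) = f(t)∂x − (x/2)[f'(t)(v∂u − u∂v) + f''(t)∂w]`. -/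
def Yf (f : ℝ → ℝ) : R7 → R7 := fun p =>
  ![0, f (p 0), 0, 0,
    -(p 1 / 2) * (deriv f (p 0) * p 5),
    (p 1 / 2) * (deriv f (p 0) * p 4),
    -(p 1 / 2) * deriv (deriv f) (p 0)]

/-- `Z(f) = f(t)∂y − (y/(2a₁))[f'(t)(v∂u − u∂v) + f''(t)∂w]`. -/
def Zf (a₁ : ℝ) (f : ℝ → ℝ) : R7 → R7 := fun p =>
  ![0, 0, f (p 0), 0,
    -(p 2 / (2 * a₁)) * (deriv f (p 0) * p 5),
    (p 2 / (2 * a₁)) * (deriv f (p 0) * p 4),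
    -(p 2 / (2 * a₁)) * deriv (deriv f) (p 0)]

/-- `Q(f) = f(t)∂z − (z/2)[f'(t)(v∂u − u∂v) + f''(t)∂w]`. -/
def Qf (f : ℝ → ℝ) : R7 → R7 := fun p =>
  ![0, 0, 0, f (p 0),
    -(p 3 / 2) * (deriv f (p 0) * p 5),
    (p 3 / 2) * (deriv f (p 0) * p 4),
    -(p 3 / 2) * deriv (deriv f) (p 0)]

/-- `W(f) = f(t)(v∂u − u∂v) + f'(t)∂w`. -/
def Wf (f : ℝ → ℝ) : R7 → R7 := fun p =>
  ![0, 0, 0, 0, f (p 0) * p 5, -(f (p 0) * p 4), deriv f (p 0)]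

/-! All three fields are affine: `X₁` is constant and `X₂ p = D p`, `X₃ p = J p` with
`D = diag(2,1,1,1,-1,-1,-2)` and `J = E₁₃ - E₃₁` the rotation generator of the `(x,z)`-plane.
For a constant field `c` and linear fields `M`, `N` one has `[c, N] = N c` and
`[M, N] = N M - M N`, so the relations reduce to `D e₀ = 2 e₀`, `J e₀ = 0` and `D J = J D`;
the last holds because `x` and `z` carry the same weight in `D`. -/

open Matrix

lemma diagonal_commute_single {n R : Type*} [Fintype n] [DecidableEq n] [CommSemiring R]
    {d : n → R} {i j : n} (hij : d i = d j) (a : R) :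
    Commute (diagonal d) (single i j a) := by
  ext k l
  simp only [diagonal_mul, mul_diagonal, single_apply]
  split_ifs with h
  · obtain ⟨rfl, rfl⟩ := h
    rw [hij, mul_comm]
  · simp

lemma fderiv_mulVec {m n : Type*} [Fintype m] [Fintype n] [DecidableEq n] (M : Matrix m n ℝ)
    (p : n → ℝ) :
    fderiv ℝ (M *ᵥ ·) p = LinearMap.toContinuousLinearMap (toLin' M) :=
  (LinearMap.toContinuousLinearMap (toLin' M)).fderiv

lemma bracket_const_mulVec (c : R7) (M : Matrix (Fin 7) (Fin 7) ℝ) :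
    bracket (fun _ => c) (M *ᵥ ·) = fun _ => M *ᵥ c := by
  ext1 p
  simp [bracket, fderiv_mulVec]

lemma bracket_mulVec (M N : Matrix (Fin 7) (Fin 7) ℝ) :
    bracket (M *ᵥ ·) (N *ᵥ ·) = ((N * M - M * N) *ᵥ ·) := by
  ext1 p
  simp [bracket, fderiv_mulVec, sub_mulVec, mulVec_mulVec]

lemma X1_eq_const_single : X1 = fun _ => Pi.single 0 1 := by
  ext p i
  fin_cases i <;> rfl

lemma X2_eq_diagonal_mulVec : X2 = (diagonal ![2, 1, 1, 1, -1, -1, -2] *ᵥ ·) := by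
  ext p i
  fin_cases i <;> simp [X2, mulVec_diagonal]

lemma X3_eq_mulVec : X3 = ((single 1 3 1 - single 3 1 1 : Matrix (Fin 7) (Fin 7) ℝ) *ᵥ ·) := by
  ext p i
  fin_cases i <;> simp [X3, sub_mulVec, single_mulVec]

theorem stmt0_general :
    bracket X1 X2 = (2 : ℝ) • X1 ∧ bracket X1 X3 = 0 ∧ bracket X2 X3 = 0 := by
  set d : Fin 7 → ℝ := ![2, 1, 1, 1, -1, -1, -2]
  have hcomm : Commute (diagonal d) (single 1 3 1 - single 3 1 1) :=
    (diagonal_commute_single (by rfl) 1).sub_right (diagonal_commute_single (by rfl) 1)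
  rw [X1_eq_const_single, X2_eq_diagonal_mulVec, X3_eq_mulVec, bracket_const_mulVec,
    bracket_const_mulVec, bracket_mulVec, hcomm.eq, sub_self]
  refine ⟨?_, ?_, ?_⟩
  · ext1 p
    rw [diagonal_mulVec_single, Pi.smul_apply, ← Pi.single_smul, smul_eq_mul]
    rfl
  · ext p i
    simp
  · ext1 p
    simp

theorem stmt0 (a₁ : ℝ) (ha₁ : a₁ ≠ 0) :
    bracket X1 X2 = (2 : ℝ) • X1 ∧ bracket X1 X3 = 0 ∧ bracket X2 X3 = 0 :=
  stmt0_general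

end
end

section
/- Let a₁ be a nonzero real constant. For all smooth functions g, h, k, m : ℝ → ℝ, the following commutation relations hold as equalities of maps ℝ⁷ → ℝ⁷: [X₁, Y(g)] = Y(g'), [X₁, Z(h)] = Z(h'), [X₁, Q(k)] = Q(k'), and [X₁, W(m)] = W(m'), where g', h', k', m' denote the derivative functions. -/
noncomputable section

/-! ### Auxiliary lemmas -/

private lemma e_zero : (![1, 0, 0, 0, 0, 0, 0] : R7) 0 = 1 := rfl
private lemma e_one : (![1, 0, 0, 0, 0, 0, 0] : R7) 1 = 0 := rfl
private lemma e_two : (![1, 0, 0, 0, 0, 0, 0] : R7) 2 = 0 := rfl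
private lemma e_three : (![1, 0, 0, 0, 0, 0, 0] : R7) 3 = 0 := rfl
private lemma e_four : (![1, 0, 0, 0, 0, 0, 0] : R7) 4 = 0 := rfl
private lemma e_five : (![1, 0, 0, 0, 0, 0, 0] : R7) 5 = 0 := rfl
private lemma e_six : (![1, 0, 0, 0, 0, 0, 0] : R7) 6 = 0 := rfl

/-- derivative of `s ↦ f (c + s)` at `0`. -/
private lemma keyA (f : ℝ → ℝ) (hf : Differentiable ℝ f) (c : ℝ) :
    HasDerivAt (fun s : ℝ => f (c + s)) (deriv f c) 0 := by
  have h1 : HasDerivAt (fun s : ℝ => c + s) 1 0 := by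
    simpa using (hasDerivAt_id (0 : ℝ)).const_add c
  have h2 : HasDerivAt f (deriv f c) (c + 0) := by
    rw [add_zero]; exact (hf c).hasDerivAt
  have h3 := h2.comp 0 h1
  rw [mul_one] at h3
  exact h3

private lemma key_bracket (B : R7 → R7) (hB : ∀ p, DifferentiableAt ℝ B p) :
    bracket X1 B = fun p => deriv (fun s : ℝ => B (p + s • ![1, 0, 0, 0, 0, 0, 0])) 0 := by
  funext p
  show fderiv ℝ B p (X1 p) - fderiv ℝ X1 p (B p) = _
  rw [show X1 = fun _ : R7 => (![1, 0, 0, 0, 0, 0, 0] : R7) from rfl, fderiv_fun_const]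
  simp only [ContinuousLinearMap.zero_apply, Pi.zero_apply, sub_zero]
  exact ((hB p).lineDeriv_eq_fderiv).symm

theorem stmt1 (a₁ : ℝ) (ha₁ : a₁ ≠ 0) (g h k m : ℝ → ℝ)
    (hg : ContDiff ℝ (⊤ : ℕ∞) g) (hh : ContDiff ℝ (⊤ : ℕ∞) h) (hk : ContDiff ℝ (⊤ : ℕ∞) k) (hm : ContDiff ℝ (⊤ : ℕ∞) m) :
    bracket X1 (Yf g) = Yf (deriv g) ∧
    bracket X1 (Zf a₁ h) = Zf a₁ (deriv h) ∧
    bracket X1 (Qf k) = Qf (deriv k) ∧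
    bracket X1 (Wf m) = Wf (deriv m) := by
  have htop : (1 : WithTop ℕ∞) ≤ ((⊤ : ℕ∞) : WithTop ℕ∞) := by exact_mod_cast le_top
  refine ⟨?_, ?_, ?_, ?_⟩
  · -- Y
    have d0 : Differentiable ℝ g := hg.differentiable (by simp)
    have d1 : Differentiable ℝ (deriv g) := (hg.iterate_deriv 1).differentiable (by simp)
    have d2 : Differentiable ℝ (deriv (deriv g)) := (hg.iterate_deriv 2).differentiable (by simp)
    have hB : ∀ p, DifferentiableAt ℝ (Yf g) p := by
      intro p
      rw [show Yf g = fun p i => Yf g p i from rfl, differentiableAt_pi]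
      intro i
      fin_cases i
      · exact differentiableAt_const 0
      · show DifferentiableAt ℝ (fun q : R7 => g (q 0)) p; fun_prop
      · exact differentiableAt_const 0
      · exact differentiableAt_const 0
      · show DifferentiableAt ℝ (fun q : R7 => -(q 1 / 2) * (deriv g (q 0) * q 5)) p; fun_prop
      · show DifferentiableAt ℝ (fun q : R7 => (q 1 / 2) * (deriv g (q 0) * q 4)) p; fun_prop
      · show DifferentiableAt ℝ (fun q : R7 => -(q 1 / 2) * deriv (deriv g) (q 0)) p; fun_prop
    rw [key_bracket _ hB]
    funext p
    have hF : (fun s : ℝ => Yf g (p + s • ![1, 0, 0, 0, 0, 0, 0])) =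
        fun s : ℝ => ![0, g (p 0 + s), 0, 0,
          -(p 1 / 2) * (deriv g (p 0 + s) * p 5),
          (p 1 / 2) * (deriv g (p 0 + s) * p 4),
          -(p 1 / 2) * deriv (deriv g) (p 0 + s)] := by
      funext s
      simp only [Yf, Pi.add_apply, Pi.smul_apply, smul_eq_mul,
        e_zero, e_one, e_four, e_five, mul_one, mul_zero, add_zero]
    rw [hF]
    refine HasDerivAt.deriv (hasDerivAt_pi.mpr ?_)
    intro i
    fin_cases i
    · exact hasDerivAt_const 0 0
    · exact keyA g d0 (p 0)
    · exact hasDerivAt_const 0 0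
    · exact hasDerivAt_const 0 0
    · exact (((keyA (deriv g) d1 (p 0)).mul_const (p 5)).const_mul (-(p 1 / 2)))
    · exact (((keyA (deriv g) d1 (p 0)).mul_const (p 4)).const_mul (p 1 / 2))
    · exact ((keyA (deriv (deriv g)) d2 (p 0)).const_mul (-(p 1 / 2)))
  · -- Z
    have d0 : Differentiable ℝ h := hh.differentiable (by simp)
    have d1 : Differentiable ℝ (deriv h) := (hh.iterate_deriv 1).differentiable (by simp)
    have d2 : Differentiable ℝ (deriv (deriv h)) := (hh.iterate_deriv 2).differentiable (by simp)
    have hB : ∀ p, DifferentiableAt ℝ (Zf a₁ h) p := by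
      intro p
      rw [show Zf a₁ h = fun p i => Zf a₁ h p i from rfl, differentiableAt_pi]
      intro i
      fin_cases i
      · exact differentiableAt_const 0
      · exact differentiableAt_const 0
      · show DifferentiableAt ℝ (fun q : R7 => h (q 0)) p; fun_prop
      · exact differentiableAt_const 0
      · show DifferentiableAt ℝ (fun q : R7 => -(q 2 / (2 * a₁)) * (deriv h (q 0) * q 5)) p; fun_prop
      · show DifferentiableAt ℝ (fun q : R7 => (q 2 / (2 * a₁)) * (deriv h (q 0) * q 4)) p; fun_prop
      · show DifferentiableAt ℝ (fun q : R7 => -(q 2 / (2 * a₁)) * deriv (deriv h) (q 0)) p; fun_prop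
    rw [key_bracket _ hB]
    funext p
    have hF : (fun s : ℝ => Zf a₁ h (p + s • ![1, 0, 0, 0, 0, 0, 0])) =
        fun s : ℝ => ![0, 0, h (p 0 + s), 0,
          -(p 2 / (2 * a₁)) * (deriv h (p 0 + s) * p 5),
          (p 2 / (2 * a₁)) * (deriv h (p 0 + s) * p 4),
          -(p 2 / (2 * a₁)) * deriv (deriv h) (p 0 + s)] := by
      funext s
      simp only [Zf, Pi.add_apply, Pi.smul_apply, smul_eq_mul,
        e_zero, e_two, e_four, e_five, mul_one, mul_zero, add_zero]
    rw [hF]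
    refine HasDerivAt.deriv (hasDerivAt_pi.mpr ?_)
    intro i
    fin_cases i
    · exact hasDerivAt_const 0 0
    · exact hasDerivAt_const 0 0
    · exact keyA h d0 (p 0)
    · exact hasDerivAt_const 0 0
    · exact (((keyA (deriv h) d1 (p 0)).mul_const (p 5)).const_mul (-(p 2 / (2 * a₁))))
    · exact (((keyA (deriv h) d1 (p 0)).mul_const (p 4)).const_mul (p 2 / (2 * a₁)))
    · exact ((keyA (deriv (deriv h)) d2 (p 0)).const_mul (-(p 2 / (2 * a₁))))
  · -- Q
    have d0 : Differentiable ℝ k := hk.differentiable (by simp)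
    have d1 : Differentiable ℝ (deriv k) := (hk.iterate_deriv 1).differentiable (by simp)
    have d2 : Differentiable ℝ (deriv (deriv k)) := (hk.iterate_deriv 2).differentiable (by simp)
    have hB : ∀ p, DifferentiableAt ℝ (Qf k) p := by
      intro p
      rw [show Qf k = fun p i => Qf k p i from rfl, differentiableAt_pi]
      intro i
      fin_cases i
      · exact differentiableAt_const 0
      · exact differentiableAt_const 0
      · exact differentiableAt_const 0
      · show DifferentiableAt ℝ (fun q : R7 => k (q 0)) p; fun_prop
      · show DifferentiableAt ℝ (fun q : R7 => -(q 3 / 2) * (deriv k (q 0) * q 5)) p; fun_prop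
      · show DifferentiableAt ℝ (fun q : R7 => (q 3 / 2) * (deriv k (q 0) * q 4)) p; fun_prop
      · show DifferentiableAt ℝ (fun q : R7 => -(q 3 / 2) * deriv (deriv k) (q 0)) p; fun_prop
    rw [key_bracket _ hB]
    funext p
    have hF : (fun s : ℝ => Qf k (p + s • ![1, 0, 0, 0, 0, 0, 0])) =
        fun s : ℝ => ![0, 0, 0, k (p 0 + s),
          -(p 3 / 2) * (deriv k (p 0 + s) * p 5),
          (p 3 / 2) * (deriv k (p 0 + s) * p 4),
          -(p 3 / 2) * deriv (deriv k) (p 0 + s)] := by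
      funext s
      simp only [Qf, Pi.add_apply, Pi.smul_apply, smul_eq_mul,
        e_zero, e_three, e_four, e_five, mul_one, mul_zero, add_zero]
    rw [hF]
    refine HasDerivAt.deriv (hasDerivAt_pi.mpr ?_)
    intro i
    fin_cases i
    · exact hasDerivAt_const 0 0
    · exact hasDerivAt_const 0 0
    · exact hasDerivAt_const 0 0
    · exact keyA k d0 (p 0)
    · exact (((keyA (deriv k) d1 (p 0)).mul_const (p 5)).const_mul (-(p 3 / 2)))
    · exact (((keyA (deriv k) d1 (p 0)).mul_const (p 4)).const_mul (p 3 / 2))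
    · exact ((keyA (deriv (deriv k)) d2 (p 0)).const_mul (-(p 3 / 2)))
  · -- W
    have d0 : Differentiable ℝ m := hm.differentiable (by simp)
    have d1 : Differentiable ℝ (deriv m) := (hm.iterate_deriv 1).differentiable (by simp)
    have hB : ∀ p, DifferentiableAt ℝ (Wf m) p := by
      intro p
      rw [show Wf m = fun p i => Wf m p i from rfl, differentiableAt_pi]
      intro i
      fin_cases i
      · exact differentiableAt_const 0
      · exact differentiableAt_const 0
      · exact differentiableAt_const 0
      · exact differentiableAt_const 0
      · show DifferentiableAt ℝ (fun q : R7 => m (q 0) * q 5) p; fun_prop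
      · show DifferentiableAt ℝ (fun q : R7 => -(m (q 0) * q 4)) p; fun_prop
      · show DifferentiableAt ℝ (fun q : R7 => deriv m (q 0)) p; fun_prop
    rw [key_bracket _ hB]
    funext p
    have hF : (fun s : ℝ => Wf m (p + s • ![1, 0, 0, 0, 0, 0, 0])) =
        fun s : ℝ => ![0, 0, 0, 0, m (p 0 + s) * p 5, -(m (p 0 + s) * p 4), deriv m (p 0 + s)] := by
      funext s
      simp only [Wf, Pi.add_apply, Pi.smul_apply, smul_eq_mul,
        e_zero, e_four, e_five, mul_one, mul_zero, add_zero]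
    rw [hF]
    refine HasDerivAt.deriv (hasDerivAt_pi.mpr ?_)
    intro i
    fin_cases i
    · exact hasDerivAt_const 0 0
    · exact hasDerivAt_const 0 0
    · exact hasDerivAt_const 0 0
    · exact hasDerivAt_const 0 0
    · exact ((keyA m d0 (p 0)).mul_const (p 5))
    · exact ((keyA m d0 (p 0)).mul_const (p 4)).neg
    · exact keyA (deriv m) d1 (p 0)

end
end

section
/- Let a₁ be a nonzero real constant. For all smooth functions g, h, k, m : ℝ → ℝ, the following commutation relations hold as equalities of maps ℝ⁷ → ℝ⁷: [X₃, Y(g)] = Q(g), [X₃, Q(k)] = −Y(k), [X₃, Z(h)] = 0, and [X₃, W(m)] = 0. -/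
noncomputable section

open ContinuousLinearMap

abbrev pr (i : Fin 7) : R7 →L[ℝ] ℝ := ContinuousLinearMap.proj i

lemma derivCD {f : ℝ → ℝ} (hf : ContDiff ℝ (⊤:ℕ∞) f) : ContDiff ℝ (⊤:ℕ∞) (deriv f) :=
  (contDiff_infty_iff_deriv.mp hf).2

lemma hasF_t {f : ℝ → ℝ} (hf : ContDiff ℝ (⊤:ℕ∞) f) (p : R7) :
    HasFDerivAt (fun q : R7 => f (q 0)) (deriv f (p 0) • pr 0) p :=
  ((hf.differentiable (by norm_num) (p 0)).hasDerivAt).comp_hasFDerivAt p (hasFDerivAt_apply 0 p)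

lemma hasF_div {c : ℝ} (i : Fin 7) (p : R7) :
    HasFDerivAt (fun q : R7 => q i / c) (c⁻¹ • pr i) p := by
  have := (hasFDerivAt_apply (𝕜 := ℝ) i p).mul_const c⁻¹
  simpa [div_eq_mul_inv] using this

lemma hasF_c {f : ℝ → ℝ} (hf : ContDiff ℝ (⊤:ℕ∞) f) (c : ℝ) (i j : Fin 7) (p : R7) :
    HasFDerivAt (fun q : R7 => (q i / c) * (deriv f (q 0) * q j))
      ((deriv f (p 0) * p j / c) • pr i + (p i / c * (deriv (deriv f) (p 0) * p j)) • pr 0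
        + (p i / c * deriv f (p 0)) • pr j) p := by
  have h2 := (hasF_t (derivCD hf) p).fun_mul (hasFDerivAt_apply (𝕜 := ℝ) j p)
  have h := (hasF_div (c := c) i p).fun_mul h2
  refine h.congr_fderiv ?_
  ext v
  simp
  ring

lemma hasF_d {f : ℝ → ℝ} (hf : ContDiff ℝ (⊤:ℕ∞) f) (c : ℝ) (i : Fin 7) (p : R7) :
    HasFDerivAt (fun q : R7 => (q i / c) * deriv (deriv f) (q 0))
      ((deriv (deriv f) (p 0) / c) • pr i + (p i / c * deriv (deriv (deriv f)) (p 0)) • pr 0) p := by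
  have h := (hasF_div (c := c) i p).fun_mul (hasF_t (derivCD (derivCD hf)) p)
  refine h.congr_fderiv ?_
  ext v
  simp
  ring

lemma hasF_e {f : ℝ → ℝ} (hf : ContDiff ℝ (⊤:ℕ∞) f) (j : Fin 7) (p : R7) :
    HasFDerivAt (fun q : R7 => f (q 0) * q j)
      ((p j * deriv f (p 0)) • pr 0 + f (p 0) • pr j) p := by
  refine ((hasF_t hf p).fun_mul (hasFDerivAt_apply (𝕜 := ℝ) j p)).congr_fderiv ?_
  ext v
  simp
  ring

lemma hasF_X3 (p : R7) :
    HasFDerivAt X3 (ContinuousLinearMap.pi ![0, pr 3, 0, -(pr 1), 0, 0, 0]) p := by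
  apply hasFDerivAt_pi'.2
  intro i
  fin_cases i
  · simpa [X3] using hasFDerivAt_const (0:ℝ) p
  · simpa [X3] using hasFDerivAt_apply (𝕜 := ℝ) 3 p
  · simpa [X3] using hasFDerivAt_const (0:ℝ) p
  · simpa [X3] using (hasFDerivAt_apply (𝕜 := ℝ) 1 p).fun_neg
  · simpa [X3] using hasFDerivAt_const (0:ℝ) p
  · simpa [X3] using hasFDerivAt_const (0:ℝ) p
  · simpa [X3] using hasFDerivAt_const (0:ℝ) p

lemma hasF_Y {f : ℝ → ℝ} (hf : ContDiff ℝ (⊤:ℕ∞) f) (p : R7) :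
    HasFDerivAt (Yf f) (ContinuousLinearMap.pi
      ![0,
        deriv f (p 0) • pr 0,
        0, 0,
        -((deriv f (p 0) * p 5 / 2) • pr 1 + (p 1 / 2 * (deriv (deriv f) (p 0) * p 5)) • pr 0
            + (p 1 / 2 * deriv f (p 0)) • pr 5),
        (deriv f (p 0) * p 4 / 2) • pr 1 + (p 1 / 2 * (deriv (deriv f) (p 0) * p 4)) • pr 0
            + (p 1 / 2 * deriv f (p 0)) • pr 4,
        -((deriv (deriv f) (p 0) / 2) • pr 1 + (p 1 / 2 * deriv (deriv (deriv f)) (p 0)) • pr 0)]) p := by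
  apply hasFDerivAt_pi'.2
  intro i
  fin_cases i
  · simpa [Yf] using hasFDerivAt_const (0:ℝ) p
  · simpa [Yf] using hasF_t hf p
  · simpa [Yf] using hasFDerivAt_const (0:ℝ) p
  · simpa [Yf] using hasFDerivAt_const (0:ℝ) p
  · refine (hasF_c hf 2 1 5 p).fun_neg.congr_of_eventuallyEq (Filter.Eventually.of_forall fun q => ?_)
    simp [Yf]
  · exact hasF_c hf 2 1 4 p
  · refine (hasF_d hf 2 1 p).fun_neg.congr_of_eventuallyEq (Filter.Eventually.of_forall fun q => ?_)
    show -(q 1 / 2) * deriv (deriv f) (q 0) = _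
    ring

lemma hasF_Z {a₁ : ℝ} {f : ℝ → ℝ} (hf : ContDiff ℝ (⊤:ℕ∞) f) (p : R7) :
    HasFDerivAt (Zf a₁ f) (ContinuousLinearMap.pi
      ![0, 0,
        deriv f (p 0) • pr 0,
        0,
        -((deriv f (p 0) * p 5 / (2 * a₁)) • pr 2
            + (p 2 / (2 * a₁) * (deriv (deriv f) (p 0) * p 5)) • pr 0
            + (p 2 / (2 * a₁) * deriv f (p 0)) • pr 5),
        (deriv f (p 0) * p 4 / (2 * a₁)) • pr 2
            + (p 2 / (2 * a₁) * (deriv (deriv f) (p 0) * p 4)) • pr 0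
            + (p 2 / (2 * a₁) * deriv f (p 0)) • pr 4,
        -((deriv (deriv f) (p 0) / (2 * a₁)) • pr 2
            + (p 2 / (2 * a₁) * deriv (deriv (deriv f)) (p 0)) • pr 0)]) p := by
  apply hasFDerivAt_pi'.2
  intro i
  fin_cases i
  · simpa [Zf] using hasFDerivAt_const (0:ℝ) p
  · simpa [Zf] using hasFDerivAt_const (0:ℝ) p
  · simpa [Zf] using hasF_t hf p
  · simpa [Zf] using hasFDerivAt_const (0:ℝ) p
  · refine (hasF_c hf (2 * a₁) 2 5 p).fun_neg.congr_of_eventuallyEq (Filter.Eventually.of_forall fun q => ?_)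
    simp [Zf]
  · exact hasF_c hf (2 * a₁) 2 4 p
  · refine (hasF_d hf (2 * a₁) 2 p).fun_neg.congr_of_eventuallyEq (Filter.Eventually.of_forall fun q => ?_)
    show -(q 2 / (2 * a₁)) * deriv (deriv f) (q 0) = _
    ring

lemma hasF_Q {f : ℝ → ℝ} (hf : ContDiff ℝ (⊤:ℕ∞) f) (p : R7) :
    HasFDerivAt (Qf f) (ContinuousLinearMap.pi
      ![0, 0, 0,
        deriv f (p 0) • pr 0,
        -((deriv f (p 0) * p 5 / 2) • pr 3 + (p 3 / 2 * (deriv (deriv f) (p 0) * p 5)) • pr 0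
            + (p 3 / 2 * deriv f (p 0)) • pr 5),
        (deriv f (p 0) * p 4 / 2) • pr 3 + (p 3 / 2 * (deriv (deriv f) (p 0) * p 4)) • pr 0
            + (p 3 / 2 * deriv f (p 0)) • pr 4,
        -((deriv (deriv f) (p 0) / 2) • pr 3 + (p 3 / 2 * deriv (deriv (deriv f)) (p 0)) • pr 0)]) p := by
  apply hasFDerivAt_pi'.2
  intro i
  fin_cases i
  · simpa [Qf] using hasFDerivAt_const (0:ℝ) p
  · simpa [Qf] using hasFDerivAt_const (0:ℝ) p
  · simpa [Qf] using hasFDerivAt_const (0:ℝ) p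
  · simpa [Qf] using hasF_t hf p
  · refine (hasF_c hf 2 3 5 p).fun_neg.congr_of_eventuallyEq (Filter.Eventually.of_forall fun q => ?_)
    simp [Qf]
  · exact hasF_c hf 2 3 4 p
  · refine (hasF_d hf 2 3 p).fun_neg.congr_of_eventuallyEq (Filter.Eventually.of_forall fun q => ?_)
    show -(q 3 / 2) * deriv (deriv f) (q 0) = _
    ring

lemma hasF_W {f : ℝ → ℝ} (hf : ContDiff ℝ (⊤:ℕ∞) f) (p : R7) :
    HasFDerivAt (Wf f) (ContinuousLinearMap.pi
      ![0, 0, 0, 0,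
        (p 5 * deriv f (p 0)) • pr 0 + f (p 0) • pr 5,
        -((p 4 * deriv f (p 0)) • pr 0 + f (p 0) • pr 4),
        deriv (deriv f) (p 0) • pr 0]) p := by
  apply hasFDerivAt_pi'.2
  intro i
  fin_cases i
  · simpa [Wf] using hasFDerivAt_const (0:ℝ) p
  · simpa [Wf] using hasFDerivAt_const (0:ℝ) p
  · simpa [Wf] using hasFDerivAt_const (0:ℝ) p
  · simpa [Wf] using hasFDerivAt_const (0:ℝ) p
  · exact hasF_e hf 5 p
  · exact (hasF_e hf 4 p).fun_neg
  · exact hasF_t (derivCD hf) p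

section vec7
variable {α : Type*} (a b c d e f g : α)
@[simp] lemma vec7_0 : ![a,b,c,d,e,f,g] (0 : Fin 7) = a := rfl
@[simp] lemma vec7_1 : ![a,b,c,d,e,f,g] (1 : Fin 7) = b := rfl
@[simp] lemma vec7_2 : ![a,b,c,d,e,f,g] (2 : Fin 7) = c := rfl
@[simp] lemma vec7_3 : ![a,b,c,d,e,f,g] (3 : Fin 7) = d := rfl
@[simp] lemma vec7_4 : ![a,b,c,d,e,f,g] (4 : Fin 7) = e := rfl
@[simp] lemma vec7_5 : ![a,b,c,d,e,f,g] (5 : Fin 7) = f := rfl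
@[simp] lemma vec7_6 : ![a,b,c,d,e,f,g] (6 : Fin 7) = g := rfl
@[simp] lemma vec7_0' (h : 0 < 7) : ![a,b,c,d,e,f,g] ⟨0, h⟩ = a := rfl
@[simp] lemma vec7_1' (h : 1 < 7) : ![a,b,c,d,e,f,g] ⟨1, h⟩ = b := rfl
@[simp] lemma vec7_2' (h : 2 < 7) : ![a,b,c,d,e,f,g] ⟨2, h⟩ = c := rfl
@[simp] lemma vec7_3' (h : 3 < 7) : ![a,b,c,d,e,f,g] ⟨3, h⟩ = d := rfl
@[simp] lemma vec7_4' (h : 4 < 7) : ![a,b,c,d,e,f,g] ⟨4, h⟩ = e := rfl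
@[simp] lemma vec7_5' (h : 5 < 7) : ![a,b,c,d,e,f,g] ⟨5, h⟩ = f := rfl
@[simp] lemma vec7_6' (h : 6 < 7) : ![a,b,c,d,e,f,g] ⟨6, h⟩ = g := rfl
end vec7

theorem stmt3 (a₁ : ℝ) (ha₁ : a₁ ≠ 0) (g h k m : ℝ → ℝ)
    (hg : ContDiff ℝ (⊤ : ℕ∞) g) (hh : ContDiff ℝ (⊤ : ℕ∞) h) (hk : ContDiff ℝ (⊤ : ℕ∞) k) (hm : ContDiff ℝ (⊤ : ℕ∞) m) :
    bracket X3 (Yf g) = Qf g ∧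
    bracket X3 (Qf k) = -(Yf k) ∧
    bracket X3 (Zf a₁ h) = 0 ∧
    bracket X3 (Wf m) = 0 := by
  refine ⟨?_, ?_, ?_, ?_⟩
  · funext p
    show fderiv ℝ (Yf g) p (X3 p) - fderiv ℝ X3 p (Yf g p) = Qf g p
    rw [(hasF_Y hg p).fderiv, (hasF_X3 p).fderiv]
    funext i
    fin_cases i <;>
      simp only [Pi.sub_apply, Pi.neg_apply, Pi.zero_apply, ContinuousLinearMap.pi_apply,
        vec7_0, vec7_1, vec7_2, vec7_3, vec7_4, vec7_5, vec7_6,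
        vec7_0', vec7_1', vec7_2', vec7_3', vec7_4', vec7_5', vec7_6', X3, Yf, Qf,
        ContinuousLinearMap.add_apply, ContinuousLinearMap.neg_apply,
        ContinuousLinearMap.smul_apply, ContinuousLinearMap.proj_apply,
        ContinuousLinearMap.zero_apply, smul_eq_mul] <;> ring
  · funext p
    show fderiv ℝ (Qf k) p (X3 p) - fderiv ℝ X3 p (Qf k p) = -(Yf k) p
    rw [(hasF_Q hk p).fderiv, (hasF_X3 p).fderiv]
    funext i
    fin_cases i <;>
      simp only [Pi.sub_apply, Pi.neg_apply, Pi.zero_apply, ContinuousLinearMap.pi_apply,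
        vec7_0, vec7_1, vec7_2, vec7_3, vec7_4, vec7_5, vec7_6,
        vec7_0', vec7_1', vec7_2', vec7_3', vec7_4', vec7_5', vec7_6', X3, Yf, Qf,
        ContinuousLinearMap.add_apply, ContinuousLinearMap.neg_apply,
        ContinuousLinearMap.smul_apply, ContinuousLinearMap.proj_apply,
        ContinuousLinearMap.zero_apply, smul_eq_mul] <;> ring
  · funext p
    show fderiv ℝ (Zf a₁ h) p (X3 p) - fderiv ℝ X3 p (Zf a₁ h p) = 0
    rw [(hasF_Z hh p).fderiv, (hasF_X3 p).fderiv]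
    funext i
    fin_cases i <;>
      simp only [Pi.sub_apply, Pi.neg_apply, Pi.zero_apply, ContinuousLinearMap.pi_apply,
        vec7_0, vec7_1, vec7_2, vec7_3, vec7_4, vec7_5, vec7_6,
        vec7_0', vec7_1', vec7_2', vec7_3', vec7_4', vec7_5', vec7_6', X3, Zf,
        ContinuousLinearMap.add_apply, ContinuousLinearMap.neg_apply,
        ContinuousLinearMap.smul_apply, ContinuousLinearMap.proj_apply,
        ContinuousLinearMap.zero_apply, smul_eq_mul] <;> ring
  · funext p
    show fderiv ℝ (Wf m) p (X3 p) - fderiv ℝ X3 p (Wf m p) = 0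
    rw [(hasF_W hm p).fderiv, (hasF_X3 p).fderiv]
    funext i
    fin_cases i <;>
      simp only [Pi.sub_apply, Pi.neg_apply, Pi.zero_apply, ContinuousLinearMap.pi_apply,
        vec7_0, vec7_1, vec7_2, vec7_3, vec7_4, vec7_5, vec7_6,
        vec7_0', vec7_1', vec7_2', vec7_3', vec7_4', vec7_5', vec7_6', X3, Wf,
        ContinuousLinearMap.add_apply, ContinuousLinearMap.neg_apply,
        ContinuousLinearMap.smul_apply, ContinuousLinearMap.proj_apply,
        ContinuousLinearMap.zero_apply, smul_eq_mul] <;> ring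

end
end

section
/- Let a₁ be a nonzero real constant. For all smooth functions g₁, g₂ : ℝ → ℝ, the commutation relation [Y(g₁), Y(g₂)] = W(t ↦ (g₁'(t)g₂(t) − g₁(t)g₂'(t))/2) holds as an equality of maps ℝ⁷ → ℝ⁷. -/
noncomputable section
set_option maxHeartbeats 1000000

lemma cons_val5 {α : Type*} (a0 a1 a2 a3 a4 a5 a6 : α) (h : 5 < 7) :
    (![a0,a1,a2,a3,a4,a5,a6] : Fin 7 → α) ⟨5, h⟩ = a5 := rfl

lemma cons_val5' {α : Type*} (a0 a1 a2 a3 a4 a5 a6 : α) :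
    (![a0,a1,a2,a3,a4,a5,a6] : Fin 7 → α) (5 : Fin 7) = a5 := rfl

lemma cons_val6' {α : Type*} (a0 a1 a2 a3 a4 a5 a6 : α) :
    (![a0,a1,a2,a3,a4,a5,a6] : Fin 7 → α) (6 : Fin 7) = a6 := rfl

lemma cons_val6 {α : Type*} (a0 a1 a2 a3 a4 a5 a6 : α) (h : 6 < 7) :
    (![a0,a1,a2,a3,a4,a5,a6] : Fin 7 → α) ⟨6, h⟩ = a6 := rfl

open ContinuousLinearMap in
lemma key_fderiv_Yf (g : ℝ → ℝ) (hg : ContDiff ℝ (⊤ : ℕ∞) g) (p v : R7) :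
    fderiv ℝ (Yf g) p v =
      ![0, deriv g (p 0) * v 0, 0, 0,
        -(v 1 / 2) * (deriv g (p 0) * p 5)
          - (p 1 / 2) * (deriv (deriv g) (p 0) * v 0 * p 5 + deriv g (p 0) * v 5),
        (v 1 / 2) * (deriv g (p 0) * p 4)
          + (p 1 / 2) * (deriv (deriv g) (p 0) * v 0 * p 4 + deriv g (p 0) * v 4),
        -(v 1 / 2) * deriv (deriv g) (p 0)
          - (p 1 / 2) * (deriv (deriv (deriv g)) (p 0) * v 0)] := by
  have hg' : ContDiff ℝ (⊤ : ℕ∞) (deriv g) := (contDiff_infty_iff_deriv.mp hg).2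
  have hg'' : ContDiff ℝ (⊤ : ℕ∞) (deriv (deriv g)) := (contDiff_infty_iff_deriv.mp hg').2
  set pr : Fin 7 → (R7 →L[ℝ] ℝ) := fun i => ContinuousLinearMap.proj i with hpr
  have hproj : ∀ i : Fin 7, HasFDerivAt (fun q : R7 => q i) (pr i) p := fun i =>
    hasFDerivAt_apply i p
  have hg0 : HasFDerivAt (fun q : R7 => g (q 0)) (deriv g (p 0) • pr 0) p :=
    ((hg.differentiable (by simp) (p 0)).hasDerivAt).comp_hasFDerivAt p (hproj 0)
  have hg1 : HasFDerivAt (fun q : R7 => deriv g (q 0)) (deriv (deriv g) (p 0) • pr 0) p :=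
    ((hg'.differentiable (by simp) (p 0)).hasDerivAt).comp_hasFDerivAt (h₂ := deriv g) p (hproj 0)
  have hg2 : HasFDerivAt (fun q : R7 => deriv (deriv g) (q 0))
      (deriv (deriv (deriv g)) (p 0) • pr 0) p :=
    ((hg''.differentiable (by simp) (p 0)).hasDerivAt).comp_hasFDerivAt (h₂ := deriv (deriv g)) p (hproj 0)
  set M : Fin 7 → (R7 →L[ℝ] ℝ) :=
    ![0, deriv g (p 0) • pr 0, 0, 0,
      (-(deriv g (p 0) * p 5 / 2)) • pr 1 + (-(p 1 / 2 * (deriv (deriv g) (p 0) * p 5))) • pr 0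
        + (-(p 1 / 2 * deriv g (p 0))) • pr 5,
      ((deriv g (p 0) * p 4 / 2)) • pr 1 + ((p 1 / 2 * (deriv (deriv g) (p 0) * p 4))) • pr 0
        + ((p 1 / 2 * deriv g (p 0))) • pr 4,
      (-(deriv (deriv g) (p 0) / 2)) • pr 1 + (-(p 1 / 2 * deriv (deriv (deriv g)) (p 0))) • pr 0]
    with hM
  have hhn : HasFDerivAt (fun q : R7 => -(q 1 / 2)) ((-(2:ℝ)⁻¹) • pr 1) p :=
    ((hproj 1).const_mul (-(2:ℝ)⁻¹)).congr_of_eventuallyEq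
      (Filter.Eventually.of_forall fun q => by ring)
  have hhp : HasFDerivAt (fun q : R7 => q 1 / 2) (((2:ℝ)⁻¹) • pr 1) p :=
    ((hproj 1).const_mul ((2:ℝ)⁻¹)).congr_of_eventuallyEq
      (Filter.Eventually.of_forall fun q => by ring)
  have H4 : HasFDerivAt (fun q : R7 => -(q 1 / 2) * (deriv g (q 0) * q 5))
      ((-(deriv g (p 0) * p 5 / 2)) • pr 1 + (-(p 1 / 2 * (deriv (deriv g) (p 0) * p 5))) • pr 0
        + (-(p 1 / 2 * deriv g (p 0))) • pr 5) p :=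
    (hhn.mul (hg1.mul (hproj 5))).congr_fderiv (by ext w; simp [pr]; ring)
  have H5 : HasFDerivAt (fun q : R7 => (q 1 / 2) * (deriv g (q 0) * q 4))
      (((deriv g (p 0) * p 4 / 2)) • pr 1 + ((p 1 / 2 * (deriv (deriv g) (p 0) * p 4))) • pr 0
        + ((p 1 / 2 * deriv g (p 0))) • pr 4) p :=
    (hhp.mul (hg1.mul (hproj 4))).congr_fderiv (by ext w; simp [pr]; ring)
  have H6 : HasFDerivAt (fun q : R7 => -(q 1 / 2) * deriv (deriv g) (q 0))
      ((-(deriv (deriv g) (p 0) / 2)) • pr 1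
        + (-(p 1 / 2 * deriv (deriv (deriv g)) (p 0))) • pr 0) p :=
    (hhn.mul hg2).congr_fderiv (by ext w; simp [pr]; ring)
  have HY : HasFDerivAt (Yf g) (ContinuousLinearMap.pi M) p := by
    apply hasFDerivAt_pi''
    intro i
    rw [ContinuousLinearMap.proj_pi]
    fin_cases i
    · simpa [Yf, hM] using hasFDerivAt_const (0:ℝ) p
    · simpa [Yf, hM] using hg0
    · simpa [Yf, hM] using hasFDerivAt_const (0:ℝ) p
    · simpa [Yf, hM] using hasFDerivAt_const (0:ℝ) p
    · simpa [Yf, hM] using H4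
    · simpa [Yf, hM] using H5
    · simpa [Yf, hM] using H6
  rw [HY.fderiv]
  funext i
  fin_cases i <;> simp [hM, pr, cons_val5, cons_val6, cons_val5', cons_val6'] <;> ring

theorem stmt4 (a₁ : ℝ) (ha₁ : a₁ ≠ 0) (g₁ g₂ : ℝ → ℝ)
    (hg₁ : ContDiff ℝ (⊤ : ℕ∞) g₁) (hg₂ : ContDiff ℝ (⊤ : ℕ∞) g₂) :
    bracket (Yf g₁) (Yf g₂) = Wf (fun t => (deriv g₁ t * g₂ t - g₁ t * deriv g₂ t) / 2) := by
  funext p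
  have d1 : HasDerivAt g₁ (deriv g₁ (p 0)) (p 0) :=
    (hg₁.differentiable (by simp) (p 0)).hasDerivAt
  have d2 : HasDerivAt g₂ (deriv g₂ (p 0)) (p 0) :=
    (hg₂.differentiable (by simp) (p 0)).hasDerivAt
  have d1' : HasDerivAt (deriv g₁) (deriv (deriv g₁) (p 0)) (p 0) :=
    (((contDiff_infty_iff_deriv.mp hg₁).2).differentiable (by simp) (p 0)).hasDerivAt
  have d2' : HasDerivAt (deriv g₂) (deriv (deriv g₂) (p 0)) (p 0) :=
    (((contDiff_infty_iff_deriv.mp hg₂).2).differentiable (by simp) (p 0)).hasDerivAt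
  have hf : deriv (fun t => (deriv g₁ t * g₂ t - g₁ t * deriv g₂ t) / 2) (p 0) =
      (deriv (deriv g₁) (p 0) * g₂ (p 0) + deriv g₁ (p 0) * deriv g₂ (p 0)
        - (deriv g₁ (p 0) * deriv g₂ (p 0) + g₁ (p 0) * deriv (deriv g₂) (p 0))) / 2 :=
    (((d1'.mul d2).sub (d1.mul d2')).div_const 2).deriv
  show fderiv ℝ (Yf g₂) p (Yf g₁ p) - fderiv ℝ (Yf g₁) p (Yf g₂ p) = _
  rw [key_fderiv_Yf g₂ hg₂ p (Yf g₁ p), key_fderiv_Yf g₁ hg₁ p (Yf g₂ p)]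
  funext i
  fin_cases i <;>
    simp [Yf, Wf, hf, cons_val5, cons_val6, cons_val5', cons_val6', Pi.sub_apply] <;>
    ring


end
end

section
/- Let a₁ be a nonzero real constant. For all smooth functions g, h, k, m, m₁, m₂ : ℝ → ℝ, the following Lie brackets vanish identically on ℝ⁷: [Y(g), Z(h)] = 0, [Y(g), Q(k)] = 0, [Y(g), W(m)] = 0, [Z(h), Q(k)] = 0, [Z(h), W(m)] = 0, [Q(k), W(m)] = 0, and [W(m₁), W(m₂)] = 0. -/
noncomputable section

namespace LieHelpers

variable {α : Type*}
lemma v0 (a0 a1 a2 a3 a4 a5 a6 : α) : ![a0,a1,a2,a3,a4,a5,a6] 0 = a0 := rfl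
lemma v1 (a0 a1 a2 a3 a4 a5 a6 : α) : ![a0,a1,a2,a3,a4,a5,a6] 1 = a1 := rfl
lemma v2 (a0 a1 a2 a3 a4 a5 a6 : α) : ![a0,a1,a2,a3,a4,a5,a6] 2 = a2 := rfl
lemma v3 (a0 a1 a2 a3 a4 a5 a6 : α) : ![a0,a1,a2,a3,a4,a5,a6] 3 = a3 := rfl
lemma v4 (a0 a1 a2 a3 a4 a5 a6 : α) : ![a0,a1,a2,a3,a4,a5,a6] 4 = a4 := rfl
lemma v5 (a0 a1 a2 a3 a4 a5 a6 : α) : ![a0,a1,a2,a3,a4,a5,a6] 5 = a5 := rfl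
lemma v6 (a0 a1 a2 a3 a4 a5 a6 : α) : ![a0,a1,a2,a3,a4,a5,a6] 6 = a6 := rfl
lemma w0 (a0 a1 a2 a3 a4 a5 a6 : α) (h : (0:ℕ) < 7) : ![a0,a1,a2,a3,a4,a5,a6] ⟨0,h⟩ = a0 := rfl
lemma w1 (a0 a1 a2 a3 a4 a5 a6 : α) (h : (1:ℕ) < 7) : ![a0,a1,a2,a3,a4,a5,a6] ⟨1,h⟩ = a1 := rfl
lemma w2 (a0 a1 a2 a3 a4 a5 a6 : α) (h : (2:ℕ) < 7) : ![a0,a1,a2,a3,a4,a5,a6] ⟨2,h⟩ = a2 := rfl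
lemma w3 (a0 a1 a2 a3 a4 a5 a6 : α) (h : (3:ℕ) < 7) : ![a0,a1,a2,a3,a4,a5,a6] ⟨3,h⟩ = a3 := rfl
lemma w4 (a0 a1 a2 a3 a4 a5 a6 : α) (h : (4:ℕ) < 7) : ![a0,a1,a2,a3,a4,a5,a6] ⟨4,h⟩ = a4 := rfl
lemma w5 (a0 a1 a2 a3 a4 a5 a6 : α) (h : (5:ℕ) < 7) : ![a0,a1,a2,a3,a4,a5,a6] ⟨5,h⟩ = a5 := rfl
lemma w6 (a0 a1 a2 a3 a4 a5 a6 : α) (h : (6:ℕ) < 7) : ![a0,a1,a2,a3,a4,a5,a6] ⟨6,h⟩ = a6 := rfl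

lemma diff_coord (i : Fin 7) : Differentiable ℝ (fun q : R7 => q i) :=
  (ContinuousLinearMap.proj (R := ℝ) (φ := fun _ : Fin 7 => ℝ) i).differentiable

lemma fderiv_coord (p v : R7) (i : Fin 7) : fderiv ℝ (fun q : R7 => q i) p v = v i := by
  have h : (fun q : R7 => q i) = ⇑(ContinuousLinearMap.proj (R := ℝ) (φ := fun _ : Fin 7 => ℝ) i) := rfl
  rw [h, ((ContinuousLinearMap.proj (R := ℝ) (φ := fun _ : Fin 7 => ℝ) i).hasFDerivAt (x := p)).fderiv]
  rfl

lemma K1 (F : ℝ → ℝ) (hF : Differentiable ℝ F) (p v : R7) :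
    fderiv ℝ (fun q : R7 => F (q 0)) p v = deriv F (p 0) * v 0 := by
  have h2 := (hF (p 0)).hasDerivAt.comp_hasFDerivAt p
    ((ContinuousLinearMap.proj (R := ℝ) (φ := fun _ : Fin 7 => ℝ) 0).hasFDerivAt (x := p))
  have h3 : (fun q : R7 => F (q 0))
      = F ∘ (ContinuousLinearMap.proj (R := ℝ) (φ := fun _ : Fin 7 => ℝ) 0) := rfl
  rw [h3, h2.fderiv]; simp

lemma mul_app (F G : R7 → ℝ) (p v : R7) (hF : DifferentiableAt ℝ F p)
    (hG : DifferentiableAt ℝ G p) :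
    fderiv ℝ (fun q => F q * G q) p v = fderiv ℝ F p v * G p + F p * fderiv ℝ G p v := by
  rw [fderiv_fun_mul hF hG]; simp; ring

lemma coord_div (c : ℝ) (i : Fin 7) (p v : R7) :
    fderiv ℝ (fun q : R7 => q i / c) p v = v i / c := by
  have h := ((ContinuousLinearMap.proj (R := ℝ) (φ := fun _ : Fin 7 => ℝ) i).hasFDerivAt (x := p)).mul_const c⁻¹
  have e : (fun q : R7 => q i / c)
      = fun q : R7 => (ContinuousLinearMap.proj (R := ℝ) (φ := fun _ : Fin 7 => ℝ) i) q * c⁻¹ := by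
    funext q; rw [div_eq_mul_inv]; rfl
  rw [e, h.fderiv, div_eq_mul_inv]
  simp [mul_comm]

lemma K4 (F : ℝ → ℝ) (hF : Differentiable ℝ F) (j : Fin 7) (p v : R7) :
    fderiv ℝ (fun q : R7 => F (q 0) * q j) p v
      = deriv F (p 0) * v 0 * p j + F (p 0) * v j := by
  rw [mul_app _ _ _ _ (by fun_prop) (by fun_prop), K1 F hF, fderiv_coord]

lemma K4n (F : ℝ → ℝ) (hF : Differentiable ℝ F) (j : Fin 7) (p v : R7) :
    fderiv ℝ (fun q : R7 => -(F (q 0) * q j)) p v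
      = -(deriv F (p 0) * v 0 * p j + F (p 0) * v j) := by
  rw [fderiv_fun_neg]; simp only [ContinuousLinearMap.neg_apply, K4 F hF]

lemma K2p (F : ℝ → ℝ) (hF : Differentiable ℝ F) (c : ℝ) (i j : Fin 7) (p v : R7) :
    fderiv ℝ (fun q : R7 => q i / c * (F (q 0) * q j)) p v
      = v i / c * (F (p 0) * p j)
        + p i / c * (deriv F (p 0) * v 0 * p j + F (p 0) * v j) := by
  rw [mul_app _ _ _ _ (by fun_prop) (by fun_prop), coord_div, K4 F hF]

lemma K2n (F : ℝ → ℝ) (hF : Differentiable ℝ F) (c : ℝ) (i j : Fin 7) (p v : R7) :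
    fderiv ℝ (fun q : R7 => -(q i / c) * (F (q 0) * q j)) p v
      = -(v i / c * (F (p 0) * p j)
        + p i / c * (deriv F (p 0) * v 0 * p j + F (p 0) * v j)) := by
  have e : (fun q : R7 => -(q i / c) * (F (q 0) * q j))
      = fun q : R7 => -(q i / c * (F (q 0) * q j)) := by funext q; ring
  rw [e, fderiv_fun_neg]
  simp only [ContinuousLinearMap.neg_apply, K2p F hF]

lemma K3p (F : ℝ → ℝ) (hF : Differentiable ℝ F) (c : ℝ) (i : Fin 7) (p v : R7) :
    fderiv ℝ (fun q : R7 => q i / c * F (q 0)) p v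
      = v i / c * F (p 0) + p i / c * (deriv F (p 0) * v 0) := by
  rw [mul_app _ _ _ _ (by fun_prop) (by fun_prop), coord_div, K1 F hF]

lemma K3n (F : ℝ → ℝ) (hF : Differentiable ℝ F) (c : ℝ) (i : Fin 7) (p v : R7) :
    fderiv ℝ (fun q : R7 => -(q i / c) * F (q 0)) p v
      = -(v i / c * F (p 0) + p i / c * (deriv F (p 0) * v 0)) := by
  have e : (fun q : R7 => -(q i / c) * F (q 0))
      = fun q : R7 => -(q i / c * F (q 0)) := by funext q; ring
  rw [e, fderiv_fun_neg]
  simp only [ContinuousLinearMap.neg_apply, K3p F hF]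

lemma fd_pi {B : R7 → R7} {p : R7} (hB : ∀ i, DifferentiableAt ℝ (fun q => B q i) p)
    (v : R7) (i : Fin 7) :
    fderiv ℝ B p v i = fderiv ℝ (fun q => B q i) p v := by
  rw [fderiv_pi hB]; rfl

lemma Yf_diff (f : ℝ → ℝ) (h0 : Differentiable ℝ f) (h1 : Differentiable ℝ (deriv f))
    (h2 : Differentiable ℝ (deriv (deriv f))) (p : R7) :
    ∀ i, DifferentiableAt ℝ (fun q : R7 => Yf f q i) p := by
  intro i; fin_cases i <;> simp only [Yf, w0, w1, w2, w3, w4, w5, w6] <;> fun_prop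

lemma Zf_diff (a₁ : ℝ) (f : ℝ → ℝ) (h0 : Differentiable ℝ f) (h1 : Differentiable ℝ (deriv f))
    (h2 : Differentiable ℝ (deriv (deriv f))) (p : R7) :
    ∀ i, DifferentiableAt ℝ (fun q : R7 => Zf a₁ f q i) p := by
  intro i; fin_cases i <;> simp only [Zf, w0, w1, w2, w3, w4, w5, w6] <;> fun_prop

lemma Qf_diff (f : ℝ → ℝ) (h0 : Differentiable ℝ f) (h1 : Differentiable ℝ (deriv f))
    (h2 : Differentiable ℝ (deriv (deriv f))) (p : R7) :
    ∀ i, DifferentiableAt ℝ (fun q : R7 => Qf f q i) p := by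
  intro i; fin_cases i <;> simp only [Qf, w0, w1, w2, w3, w4, w5, w6] <;> fun_prop

lemma Wf_diff (f : ℝ → ℝ) (h0 : Differentiable ℝ f) (h1 : Differentiable ℝ (deriv f))
    (p : R7) :
    ∀ i, DifferentiableAt ℝ (fun q : R7 => Wf f q i) p := by
  intro i; fin_cases i <;> simp only [Wf, w0, w1, w2, w3, w4, w5, w6] <;> fun_prop

lemma smooth3 (f : ℝ → ℝ) (hf : ContDiff ℝ (⊤ : ℕ∞) f) :
    Differentiable ℝ f ∧ Differentiable ℝ (deriv f) ∧ Differentiable ℝ (deriv (deriv f)) := by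
  have h1 : ContDiff ℝ (⊤ : ℕ∞) (deriv f) := (contDiff_infty_iff_deriv.mp hf).2
  have h2 : ContDiff ℝ (⊤ : ℕ∞) (deriv (deriv f)) := (contDiff_infty_iff_deriv.mp h1).2
  exact ⟨hf.differentiable (by simp),
    h1.differentiable (by simp),
    h2.differentiable (by simp)⟩

end LieHelpers

open LieHelpers in
theorem stmt7 (a₁ : ℝ) (ha₁ : a₁ ≠ 0) (g h k m m₁ m₂ : ℝ → ℝ)
    (hg : ContDiff ℝ (⊤ : ℕ∞) g) (hh : ContDiff ℝ (⊤ : ℕ∞) h) (hk : ContDiff ℝ (⊤ : ℕ∞) k)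
    (hm : ContDiff ℝ (⊤ : ℕ∞) m) (hm₁ : ContDiff ℝ (⊤ : ℕ∞) m₁) (hm₂ : ContDiff ℝ (⊤ : ℕ∞) m₂) :
    bracket (Yf g) (Zf a₁ h) = 0 ∧
    bracket (Yf g) (Qf k) = 0 ∧
    bracket (Yf g) (Wf m) = 0 ∧
    bracket (Zf a₁ h) (Qf k) = 0 ∧
    bracket (Zf a₁ h) (Wf m) = 0 ∧
    bracket (Qf k) (Wf m) = 0 ∧
    bracket (Wf m₁) (Wf m₂) = 0 := by
  obtain ⟨dg0, dg1, dg2⟩ := smooth3 g hg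
  obtain ⟨dh0, dh1, dh2⟩ := smooth3 h hh
  obtain ⟨dk0, dk1, dk2⟩ := smooth3 k hk
  obtain ⟨dm0, dm1, dm2⟩ := smooth3 m hm
  obtain ⟨dp0, dp1, dp2⟩ := smooth3 m₁ hm₁
  obtain ⟨dq0, dq1, dq2⟩ := smooth3 m₂ hm₂
  refine ⟨?_, ?_, ?_, ?_, ?_, ?_, ?_⟩
  · funext p i
    simp only [bracket, Pi.sub_apply, Pi.zero_apply]
    rw [fd_pi (Zf_diff a₁ h dh0 dh1 dh2 p), fd_pi (Yf_diff g dg0 dg1 dg2 p)]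
    fin_cases i <;>
      simp only [Yf, Zf, w0, w1, w2, w3, w4, w5, w6, v0, v1, v2, v3, v4, v5, v6,
        K1, K2p, K2n, K3p, K3n, K4, K4n, fderiv_fun_const, ContinuousLinearMap.zero_apply,
        dg0, dg1, dg2, dh0, dh1, dh2, Pi.zero_apply] <;>
      ring
  · funext p i
    simp only [bracket, Pi.sub_apply, Pi.zero_apply]
    rw [fd_pi (Qf_diff k dk0 dk1 dk2 p), fd_pi (Yf_diff g dg0 dg1 dg2 p)]
    fin_cases i <;>
      simp only [Yf, Qf, w0, w1, w2, w3, w4, w5, w6, v0, v1, v2, v3, v4, v5, v6,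
        K1, K2p, K2n, K3p, K3n, K4, K4n, fderiv_fun_const, ContinuousLinearMap.zero_apply,
        dg0, dg1, dg2, dk0, dk1, dk2, Pi.zero_apply] <;>
      ring
  · funext p i
    simp only [bracket, Pi.sub_apply, Pi.zero_apply]
    rw [fd_pi (Wf_diff m dm0 dm1 p), fd_pi (Yf_diff g dg0 dg1 dg2 p)]
    fin_cases i <;>
      simp only [Yf, Wf, w0, w1, w2, w3, w4, w5, w6, v0, v1, v2, v3, v4, v5, v6,
        K1, K2p, K2n, K3p, K3n, K4, K4n, fderiv_fun_const, ContinuousLinearMap.zero_apply,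
        dg0, dg1, dg2, dm0, dm1, dm2, Pi.zero_apply] <;>
      ring
  · funext p i
    simp only [bracket, Pi.sub_apply, Pi.zero_apply]
    rw [fd_pi (Qf_diff k dk0 dk1 dk2 p), fd_pi (Zf_diff a₁ h dh0 dh1 dh2 p)]
    fin_cases i <;>
      simp only [Zf, Qf, w0, w1, w2, w3, w4, w5, w6, v0, v1, v2, v3, v4, v5, v6,
        K1, K2p, K2n, K3p, K3n, K4, K4n, fderiv_fun_const, ContinuousLinearMap.zero_apply,
        dh0, dh1, dh2, dk0, dk1, dk2, Pi.zero_apply] <;>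
      ring
  · funext p i
    simp only [bracket, Pi.sub_apply, Pi.zero_apply]
    rw [fd_pi (Wf_diff m dm0 dm1 p), fd_pi (Zf_diff a₁ h dh0 dh1 dh2 p)]
    fin_cases i <;>
      simp only [Zf, Wf, w0, w1, w2, w3, w4, w5, w6, v0, v1, v2, v3, v4, v5, v6,
        K1, K2p, K2n, K3p, K3n, K4, K4n, fderiv_fun_const, ContinuousLinearMap.zero_apply,
        dh0, dh1, dh2, dm0, dm1, dm2, Pi.zero_apply] <;>
      ring
  · funext p i
    simp only [bracket, Pi.sub_apply, Pi.zero_apply]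
    rw [fd_pi (Wf_diff m dm0 dm1 p), fd_pi (Qf_diff k dk0 dk1 dk2 p)]
    fin_cases i <;>
      simp only [Qf, Wf, w0, w1, w2, w3, w4, w5, w6, v0, v1, v2, v3, v4, v5, v6,
        K1, K2p, K2n, K3p, K3n, K4, K4n, fderiv_fun_const, ContinuousLinearMap.zero_apply,
        dk0, dk1, dk2, dm0, dm1, dm2, Pi.zero_apply] <;>
      ring
  · funext p i
    simp only [bracket, Pi.sub_apply, Pi.zero_apply]
    rw [fd_pi (Wf_diff m₂ dq0 dq1 p), fd_pi (Wf_diff m₁ dp0 dp1 p)]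
    fin_cases i <;>
      simp only [Wf, w0, w1, w2, w3, w4, w5, w6, v0, v1, v2, v3, v4, v5, v6,
        K1, K2p, K2n, K3p, K3n, K4, K4n, fderiv_fun_const, ContinuousLinearMap.zero_apply,
        dp0, dp1, dq0, dq1, Pi.zero_apply] <;>
      ring

end
end

section
/- (Rotational symmetry generated by X₃ = z∂x − x∂z.) Suppose the pair (ψ, w) solves DS. Then for every θ ∈ ℝ, the pair (ψ̃, w̃) defined by ψ̃(t,x,y,z) = ψ(t, x·cos θ + z·sin θ, y, −x·sin θ + z·cos θ) and w̃(t,x,y,z) = w(t, x·cos θ + z·sin θ, y, −x·sin θ + z·cos θ) also solves DS. -/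
noncomputable section

/-- `ψ : ℝ⁴ → ℂ` (curried as a function of `t x y z`) is smooth. -/
def SmoothC (ψ : ℝ → ℝ → ℝ → ℝ → ℂ) : Prop :=
  ContDiff ℝ (⊤ : ℕ∞) fun p : ℝ × ℝ × ℝ × ℝ => ψ p.1 p.2.1 p.2.2.1 p.2.2.2

/-- `w : ℝ⁴ → ℝ` (curried as a function of `t x y z`) is smooth. -/
def SmoothR (w : ℝ → ℝ → ℝ → ℝ → ℝ) : Prop :=
  ContDiff ℝ (⊤ : ℕ∞) fun p : ℝ × ℝ × ℝ × ℝ => w p.1 p.2.1 p.2.2.1 p.2.2.2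

/-- The pair `(ψ, w)` satisfies both equations of the (3+1)-dimensional
Davey–Stewartson system
`i·ψ_t + ψ_xx + a₁ψ_yy + ψ_zz = a₂|ψ|²ψ + ψw`,
`w_xx + b₁w_yy + w_zz = b₂(|ψ|²)_yy`
at the point `(t,x,y,z)`. -/
def SolvesDSAt (a₁ a₂ b₁ b₂ : ℝ) (ψ : ℝ → ℝ → ℝ → ℝ → ℂ) (w : ℝ → ℝ → ℝ → ℝ → ℝ)
    (t x y z : ℝ) : Prop :=
  (Complex.I * deriv (fun t' => ψ t' x y z) t
      + deriv (deriv (fun x' => ψ t x' y z)) x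
      + (a₁ : ℂ) * deriv (deriv (fun y' => ψ t x y' z)) y
      + deriv (deriv (fun z' => ψ t x y z')) z
    = (a₂ : ℂ) * (‖ψ t x y z‖ : ℂ) ^ 2 * ψ t x y z
      + ψ t x y z * (w t x y z : ℂ)) ∧
  (deriv (deriv (fun x' => w t x' y z)) x
      + b₁ * deriv (deriv (fun y' => w t x y' z)) y
      + deriv (deriv (fun z' => w t x y z')) z
    = b₂ * deriv (deriv (fun y' => ‖ψ t x y' z‖ ^ 2)) y)

/-- The pair `(ψ, w)` solves the (3+1)-dimensional Davey–Stewartson system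
at every point of `ℝ⁴`. -/
def SolvesDS (a₁ a₂ b₁ b₂ : ℝ) (ψ : ℝ → ℝ → ℝ → ℝ → ℂ) (w : ℝ → ℝ → ℝ → ℝ → ℝ) : Prop :=
  ∀ t x y z : ℝ, SolvesDSAt a₁ a₂ b₁ b₂ ψ w t x y z


noncomputable section

abbrev V4 := ℝ × ℝ × ℝ × ℝ

variable {E : Type*} [NormedAddCommGroup E] [NormedSpace ℝ E]

lemma deriv_line (Φ : V4 → E) (hΦ : ContDiff ℝ (⊤:ℕ∞) Φ) (p v : V4) :
    deriv (fun u : ℝ => Φ (p + u • v)) = fun u => fderiv ℝ Φ (p + u • v) v := by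
  funext u
  have hline : HasDerivAt (fun u : ℝ => p + u • v) v u := by
    simpa using ((hasDerivAt_id u).smul_const v).const_add p
  exact ((hΦ.differentiable (by simp) (p + u • v)).hasFDerivAt.comp_hasDerivAt u hline).deriv

lemma deriv2_line (Φ : V4 → E) (hΦ : ContDiff ℝ (⊤:ℕ∞) Φ) (p v : V4) (r : ℝ) :
    deriv (deriv (fun u : ℝ => Φ (p + u • v))) r
      = fderiv ℝ (fderiv ℝ Φ) (p + r • v) v v := by
  rw [deriv_line Φ hΦ p v]
  have hg : ContDiff ℝ (⊤:ℕ∞) (fun q => fderiv ℝ Φ q v) :=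
    (hΦ.fderiv_right (m := ((⊤:ℕ∞) : WithTop ℕ∞)) (by norm_num)).clm_apply contDiff_const
  have h2 := congrFun (deriv_line (fun q => fderiv ℝ Φ q v) hg p v) r
  have hd : DifferentiableAt ℝ (fderiv ℝ Φ) (p + r • v) :=
    ((hΦ.fderiv_right (m := ((⊤:ℕ∞) : WithTop ℕ∞)) (by norm_num)).differentiable (by simp)) _
  rw [h2, fderiv_clm_apply hd (differentiableAt_const v)]
  simp

end

noncomputable section
variable {E : Type*} [NormedAddCommGroup E] [NormedSpace ℝ E]

lemma rot_sum (Φ : V4 → E) (hΦ : ContDiff ℝ (⊤:ℕ∞) Φ) (t y x z c s : ℝ)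
    (hcs : c ^ 2 + s ^ 2 = 1) :
    deriv (deriv (fun x' => Φ (t, x' * c + z * s, y, -x' * s + z * c))) x
      + deriv (deriv (fun z' => Φ (t, x * c + z' * s, y, -x * s + z' * c))) z
    = deriv (deriv (fun x' => Φ (t, x', y, -x * s + z * c))) (x * c + z * s)
      + deriv (deriv (fun z' => Φ (t, x * c + z * s, y, z'))) (-x * s + z * c) := by
  set P : V4 := (t, x * c + z * s, y, -x * s + z * c) with hP
  set ex : V4 := (0, 1, 0, 0)
  set ez : V4 := (0, 0, 0, 1)
  set v : V4 := (0, c, 0, -s)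
  set wv : V4 := (0, s, 0, c)
  have e1 : (fun x' : ℝ => Φ (t, x' * c + z * s, y, -x' * s + z * c))
      = fun x' => Φ ((t, z * s, y, z * c) + x' • v) := by
    funext x'; congr 1
    simp [v, Prod.ext_iff, smul_eq_mul]; try constructor <;> ring
  have e2 : (fun z' : ℝ => Φ (t, x * c + z' * s, y, -x * s + z' * c))
      = fun z' => Φ ((t, x * c, y, -x * s) + z' • wv) := by
    funext z'; congr 1
    simp [wv, Prod.ext_iff, smul_eq_mul]; try constructor <;> ring
  have e3 : (fun x' : ℝ => Φ (t, x', y, -x * s + z * c))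
      = fun x' => Φ ((t, 0, y, -x * s + z * c) + x' • ex) := by
    funext x'; congr 1
    simp [ex, Prod.ext_iff, smul_eq_mul]
  have e4 : (fun z' : ℝ => Φ (t, x * c + z * s, y, z'))
      = fun z' => Φ ((t, x * c + z * s, y, 0) + z' • ez) := by
    funext z'; congr 1
    simp [ez, Prod.ext_iff, smul_eq_mul]
  rw [e1, e2, e3, e4, deriv2_line Φ hΦ _ _ x, deriv2_line Φ hΦ _ _ z,
    deriv2_line Φ hΦ _ _ (x * c + z * s), deriv2_line Φ hΦ _ _ (-x * s + z * c)]
  have p1 : (t, z * s, y, z * c) + x • v = P := by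
    simp [v, P, Prod.ext_iff, smul_eq_mul]; try constructor <;> ring
  have p2 : (t, x * c, y, -x * s) + z • wv = P := by
    simp [wv, P, Prod.ext_iff, smul_eq_mul]; try constructor <;> ring
  have p3 : (t, 0, y, -x * s + z * c) + (x * c + z * s) • ex = P := by
    simp [ex, P, Prod.ext_iff, smul_eq_mul]
  have p4 : (t, x * c + z * s, y, 0) + (-x * s + z * c) • ez = P := by
    simp [ez, P, Prod.ext_iff, smul_eq_mul]
  rw [p1, p2, p3, p4]
  have hv : v = c • ex + (-s) • ez := by
    simp [v, ex, ez, Prod.ext_iff, smul_eq_mul]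
  have hw : wv = s • ex + c • ez := by
    simp [wv, ex, ez, Prod.ext_iff, smul_eq_mul]
  rw [hv, hw]
  set B := fderiv ℝ (fderiv ℝ Φ) P with hB
  have expand : B (c • ex + (-s) • ez) (c • ex + (-s) • ez)
        + B (s • ex + c • ez) (s • ex + c • ez)
      = (c ^ 2 + s ^ 2) • B ex ex + (c ^ 2 + s ^ 2) • B ez ez := by
    simp only [map_add, map_smul, ContinuousLinearMap.add_apply,
      ContinuousLinearMap.smul_apply, ContinuousLinearMap.coe_smul', Pi.smul_apply]
    module
  rw [expand, hcs, one_smul, one_smul]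

end

/-- Rotational symmetry generated by `X₃ = z∂x − x∂z`. -/
theorem stmt11 (a₁ a₂ b₁ b₂ : ℝ) (ha₁ : a₁ ≠ 0) (ha₂ : a₂ ≠ 0) (hb₁ : b₁ ≠ 0) (hb₂ : b₂ ≠ 0)
    (ψ : ℝ → ℝ → ℝ → ℝ → ℂ) (w : ℝ → ℝ → ℝ → ℝ → ℝ)
    (hψ : SmoothC ψ) (hw : SmoothR w)
    (hsol : SolvesDS a₁ a₂ b₁ b₂ ψ w)
    (θ : ℝ) :
    SolvesDS a₁ a₂ b₁ b₂
      (fun t x y z => ψ t (x * Real.cos θ + z * Real.sin θ) y (-x * Real.sin θ + z * Real.cos θ))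
      (fun t x y z => w t (x * Real.cos θ + z * Real.sin θ) y (-x * Real.sin θ + z * Real.cos θ)) := by
  intro t x y z
  have hcs : Real.cos θ ^ 2 + Real.sin θ ^ 2 = 1 := Real.cos_sq_add_sin_sq θ
  have keyψ :
      deriv (deriv (fun x' => ψ t (x' * Real.cos θ + z * Real.sin θ) y
          (-x' * Real.sin θ + z * Real.cos θ))) x
        + deriv (deriv (fun z' => ψ t (x * Real.cos θ + z' * Real.sin θ) y
          (-x * Real.sin θ + z' * Real.cos θ))) z
      = deriv (deriv (fun x' => ψ t x' y (-x * Real.sin θ + z * Real.cos θ)))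
          (x * Real.cos θ + z * Real.sin θ)
        + deriv (deriv (fun z' => ψ t (x * Real.cos θ + z * Real.sin θ) y z'))
          (-x * Real.sin θ + z * Real.cos θ) :=
    rot_sum (fun q => ψ q.1 q.2.1 q.2.2.1 q.2.2.2) hψ t y x z _ _ hcs
  have keyw :
      deriv (deriv (fun x' => w t (x' * Real.cos θ + z * Real.sin θ) y
          (-x' * Real.sin θ + z * Real.cos θ))) x
        + deriv (deriv (fun z' => w t (x * Real.cos θ + z' * Real.sin θ) y
          (-x * Real.sin θ + z' * Real.cos θ))) z
      = deriv (deriv (fun x' => w t x' y (-x * Real.sin θ + z * Real.cos θ)))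
          (x * Real.cos θ + z * Real.sin θ)
        + deriv (deriv (fun z' => w t (x * Real.cos θ + z * Real.sin θ) y z'))
          (-x * Real.sin θ + z * Real.cos θ) :=
    rot_sum (fun q => w q.1 q.2.1 q.2.2.1 q.2.2.2) hw t y x z _ _ hcs
  obtain ⟨h1, h2⟩ := hsol t (x * Real.cos θ + z * Real.sin θ) y
    (-x * Real.sin θ + z * Real.cos θ)
  constructor
  · linear_combination h1 + keyψ
  · linear_combination h2 + keyw

end
end

section
/- (Finite symmetry generated by Y(g).) Let g : ℝ → ℝ be smooth and ε ∈ ℝ. Suppose the pair (ψ, w) solves DS. Then the pair (ψ̃, w̃) defined by ψ̃(t,x,y,z) = exp(i·(ε·g'(t)·x/2 − ε²·g(t)·g'(t)/4)) · ψ(t, x − ε·g(t), y, z) and w̃(t,x,y,z) = w(t, x − ε·g(t), y, z) − ε·g''(t)·x/2 + ε²·g(t)·g''(t)/4 also solves DS. -/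
noncomputable section

namespace DSaux

abbrev E4 := ℝ × ℝ × ℝ × ℝ

variable {𝔼 : Type*} [NormedAddCommGroup 𝔼] [NormedSpace ℝ 𝔼]
variable {F : E4 → 𝔼}

def et : E4 := (1,0,0,0)
def ex : E4 := (0,1,0,0)
def ey : E4 := (0,0,1,0)
def ez : E4 := (0,0,0,1)

theorem curveT (hF : ContDiff ℝ (⊤:ℕ∞) F) {c : ℝ → ℝ} {v t : ℝ} (hc : HasDerivAt c v t)
    (y z : ℝ) :
    HasDerivAt (fun t' => F (t', c t', y, z))
      (fderiv ℝ F (t, c t, y, z) et + v • fderiv ℝ F (t, c t, y, z) ex) t := by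
  have h1 : HasDerivAt (fun t' : ℝ => ((t', c t', y, z) : E4)) (1, v, 0, 0) t :=
    (hasDerivAt_id t).prodMk (hc.prodMk (hasDerivAt_const t (y, z)))
  have h2 := ((hF.differentiable (by simp) _).hasFDerivAt).comp_hasDerivAt t h1
  convert h2 using 1
  · rfl
  have : ((1, v, 0, 0) : E4) = et + v • ex := by simp [et, ex, Prod.ext_iff]
  rw [this, map_add, map_smul]

theorem sliceT (hF : ContDiff ℝ (⊤:ℕ∞) F) (t x y z : ℝ) :
    HasDerivAt (fun t' => F (t', x, y, z)) (fderiv ℝ F (t, x, y, z) et) t := by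
  have := curveT hF (hasDerivAt_const t x) y z
  simpa using this

theorem sliceX (hF : ContDiff ℝ (⊤:ℕ∞) F) (t x y z : ℝ) :
    HasDerivAt (fun x' => F (t, x', y, z)) (fderiv ℝ F (t, x, y, z) ex) x := by
  have h1 : HasDerivAt (fun x' : ℝ => ((t, x', y, z) : E4)) (0, 1, 0, 0) x :=
    (hasDerivAt_const x t).prodMk ((hasDerivAt_id x).prodMk (hasDerivAt_const x (y, z)))
  exact ((hF.differentiable (by simp) _).hasFDerivAt).comp_hasDerivAt x h1

theorem sliceY (hF : ContDiff ℝ (⊤:ℕ∞) F) (t x y z : ℝ) :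
    HasDerivAt (fun y' => F (t, x, y', z)) (fderiv ℝ F (t, x, y, z) ey) y := by
  have h1 : HasDerivAt (fun y' : ℝ => ((t, x, y', z) : E4)) (0, 0, 1, 0) y :=
    (hasDerivAt_const y t).prodMk ((hasDerivAt_const y x).prodMk
      ((hasDerivAt_id y).prodMk (hasDerivAt_const y z)))
  exact ((hF.differentiable (by simp) _).hasFDerivAt).comp_hasDerivAt y h1

theorem sliceZ (hF : ContDiff ℝ (⊤:ℕ∞) F) (t x y z : ℝ) :
    HasDerivAt (fun z' => F (t, x, y, z')) (fderiv ℝ F (t, x, y, z) ez) z := by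
  have h1 : HasDerivAt (fun z' : ℝ => ((t, x, y, z') : E4)) (0, 0, 0, 1) z :=
    (hasDerivAt_const z t).prodMk ((hasDerivAt_const z x).prodMk
      ((hasDerivAt_const z y).prodMk (hasDerivAt_id z)))
  exact ((hF.differentiable (by simp) _).hasFDerivAt).comp_hasDerivAt z h1

theorem contDiff_pderiv (hF : ContDiff ℝ (⊤:ℕ∞) F) (v : E4) :
    ContDiff ℝ (⊤:ℕ∞) (fun p : E4 => fderiv ℝ F p v) :=
  (hF.fderiv_right (by exact_mod_cast le_top)).clm_apply contDiff_const

end DSaux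

open DSaux Complex

/-- Finite symmetry generated by `Y(g)`. -/
theorem stmt12 (a₁ a₂ b₁ b₂ : ℝ) (ha₁ : a₁ ≠ 0) (ha₂ : a₂ ≠ 0) (hb₁ : b₁ ≠ 0) (hb₂ : b₂ ≠ 0)
    (ψ : ℝ → ℝ → ℝ → ℝ → ℂ) (w : ℝ → ℝ → ℝ → ℝ → ℝ)
    (hψ : SmoothC ψ) (hw : SmoothR w)
    (hsol : SolvesDS a₁ a₂ b₁ b₂ ψ w)
    (g : ℝ → ℝ) (hg : ContDiff ℝ (⊤ : ℕ∞) g) (ε : ℝ) :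
    SolvesDS a₁ a₂ b₁ b₂
      (fun t x y z =>
        Complex.exp (Complex.I * ((ε * deriv g t * x / 2 - ε ^ 2 * g t * deriv g t / 4 : ℝ) : ℂ)) *
          ψ t (x - ε * g t) y z)
      (fun t x y z =>
        w t (x - ε * g t) y z - ε * deriv (deriv g) t * x / 2
          + ε ^ 2 * g t * deriv (deriv g) t / 4) := by
  intro t x y z
  -- basic smoothness facts
  have hF : ContDiff ℝ (⊤:ℕ∞) (fun p : E4 => ψ p.1 p.2.1 p.2.2.1 p.2.2.2) := hψ
  have hW : ContDiff ℝ (⊤:ℕ∞) (fun p : E4 => w p.1 p.2.1 p.2.2.1 p.2.2.2) := hw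
  set F : E4 → ℂ := fun p : E4 => ψ p.1 p.2.1 p.2.2.1 p.2.2.2 with hFdef
  set W : E4 → ℝ := fun p : E4 => w p.1 p.2.1 p.2.2.1 p.2.2.2 with hWdef
  have hGx : ContDiff ℝ (⊤:ℕ∞) (fun p : E4 => fderiv ℝ F p ex) := contDiff_pderiv hF ex
  have hGy : ContDiff ℝ (⊤:ℕ∞) (fun p : E4 => fderiv ℝ F p ey) := contDiff_pderiv hF ey
  have hGz : ContDiff ℝ (⊤:ℕ∞) (fun p : E4 => fderiv ℝ F p ez) := contDiff_pderiv hF ez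
  have hWx : ContDiff ℝ (⊤:ℕ∞) (fun p : E4 => fderiv ℝ W p ex) := contDiff_pderiv hW ex
  have hWy : ContDiff ℝ (⊤:ℕ∞) (fun p : E4 => fderiv ℝ W p ey) := contDiff_pderiv hW ey
  have hWz : ContDiff ℝ (⊤:ℕ∞) (fun p : E4 => fderiv ℝ W p ez) := contDiff_pderiv hW ez
  have hgdiff : Differentiable ℝ g := hg.differentiable (by simp)
  have hgd : ContDiff ℝ (⊤:ℕ∞) (deriv g) := by
    have := (contDiff_infty_iff_deriv.mp (by exact_mod_cast hg)).2
    exact_mod_cast this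
  have hg1 : HasDerivAt g (deriv g t) t := (hgdiff t).hasDerivAt
  have hg2 : HasDerivAt (deriv g) (deriv (deriv g) t) t :=
    ((hgd.differentiable (by simp)) t).hasDerivAt
  constructor
  · -- first equation
    have horig := (hsol t (x - ε * g t) y z).1
    have ept : deriv (fun t' => ψ t' (x - ε * g t) y z) t
        = fderiv ℝ F (t, x - ε * g t, y, z) et := (sliceT hF t (x - ε * g t) y z).deriv
    have epx : deriv (fun x' => ψ t x' y z) = fun u => fderiv ℝ F (t, u, y, z) ex :=
      funext fun u => (sliceX hF t u y z).deriv
    have epy : deriv (fun y' => ψ t (x - ε * g t) y' z)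
        = fun v => fderiv ℝ F (t, x - ε * g t, v, z) ey :=
      funext fun v => (sliceY hF t (x - ε * g t) v z).deriv
    have epz : deriv (fun z' => ψ t (x - ε * g t) y z')
        = fun u => fderiv ℝ F (t, x - ε * g t, y, u) ez :=
      funext fun u => (sliceZ hF t (x - ε * g t) y u).deriv
    rw [ept, epx, epy, epz] at horig
    rw [(sliceX hGx t (x - ε * g t) y z).deriv, (sliceY hGy t (x - ε * g t) y z).deriv,
      (sliceZ hGz t (x - ε * g t) y z).deriv] at horig
    -- time derivative of the transformed field
    have hshift : HasDerivAt (fun t' => x - ε * g t') (-(ε * deriv g t)) t :=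
      (hg1.const_mul ε).const_sub x
    have hP : HasDerivAt (fun t' => ψ t' (x - ε * g t') y z)
        (fderiv ℝ F (t, x - ε * g t, y, z) et
          + (-(ε * deriv g t)) • fderiv ℝ F (t, x - ε * g t, y, z) ex) t :=
      curveT hF hshift y z
    have hphit : HasDerivAt (fun t' => ε * deriv g t' * x / 2 - ε ^ 2 * g t' * deriv g t' / 4)
        (ε * deriv (deriv g) t * x / 2
          - (ε ^ 2 * deriv g t * deriv g t + ε ^ 2 * g t * deriv (deriv g) t) / 4) t := by
      have h1 := ((hg2.const_mul ε).mul_const x).div_const 2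
      have h2 := ((hg1.const_mul (ε ^ 2)).mul hg2).div_const 4
      exact h1.sub h2
    have hE : HasDerivAt (fun t' => Complex.exp (Complex.I *
          ((ε * deriv g t' * x / 2 - ε ^ 2 * g t' * deriv g t' / 4 : ℝ) : ℂ)))
        (Complex.exp (Complex.I *
            ((ε * deriv g t * x / 2 - ε ^ 2 * g t * deriv g t / 4 : ℝ) : ℂ)) *
          (Complex.I * ((ε * deriv (deriv g) t * x / 2
            - (ε ^ 2 * deriv g t * deriv g t + ε ^ 2 * g t * deriv (deriv g) t) / 4 : ℝ) : ℂ))) t :=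
      ((hphit.ofReal_comp).const_mul Complex.I).cexp
    have eT1 : deriv (fun t' => Complex.exp (Complex.I *
          ((ε * deriv g t' * x / 2 - ε ^ 2 * g t' * deriv g t' / 4 : ℝ) : ℂ))
            * ψ t' (x - ε * g t') y z) t
        = Complex.exp (Complex.I *
            ((ε * deriv g t * x / 2 - ε ^ 2 * g t * deriv g t / 4 : ℝ) : ℂ)) *
          (Complex.I * ((ε * deriv (deriv g) t * x / 2
            - (ε ^ 2 * deriv g t * deriv g t + ε ^ 2 * g t * deriv (deriv g) t) / 4 : ℝ) : ℂ))
            * ψ t (x - ε * g t) y z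
          + Complex.exp (Complex.I *
              ((ε * deriv g t * x / 2 - ε ^ 2 * g t * deriv g t / 4 : ℝ) : ℂ)) *
            (fderiv ℝ F (t, x - ε * g t, y, z) et
              + (-(ε * deriv g t)) • fderiv ℝ F (t, x - ε * g t, y, z) ex) :=
      (hE.mul hP).deriv
    -- x-derivatives
    have hDx1 : deriv (fun x' => Complex.exp (Complex.I *
          ((ε * deriv g t * x' / 2 - ε ^ 2 * g t * deriv g t / 4 : ℝ) : ℂ))
            * ψ t (x' - ε * g t) y z)
        = fun u => Complex.exp (Complex.I *
            ((ε * deriv g t * u / 2 - ε ^ 2 * g t * deriv g t / 4 : ℝ) : ℂ)) *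
              (Complex.I * ((ε * deriv g t * 1 / 2 : ℝ) : ℂ)) * ψ t (u - ε * g t) y z
          + Complex.exp (Complex.I *
              ((ε * deriv g t * u / 2 - ε ^ 2 * g t * deriv g t / 4 : ℝ) : ℂ)) *
            fderiv ℝ F (t, u - ε * g t, y, z) ex := by
      funext u
      have hphix : HasDerivAt (fun x' => ε * deriv g t * x' / 2 - ε ^ 2 * g t * deriv g t / 4)
          (ε * deriv g t * 1 / 2) u :=
        (((hasDerivAt_id u).const_mul (ε * deriv g t)).div_const 2).sub_const _
      have hEx := ((hphix.ofReal_comp).const_mul Complex.I).cexp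
      have hpsix : HasDerivAt (fun x' => ψ t (x' - ε * g t) y z)
          (fderiv ℝ F (t, u - ε * g t, y, z) ex) u :=
        HasDerivAt.comp_sub_const u (ε * g t) (sliceX hF t (u - ε * g t) y z)
      exact (hEx.mul hpsix).deriv
    have eT2 : deriv (deriv (fun x' => Complex.exp (Complex.I *
          ((ε * deriv g t * x' / 2 - ε ^ 2 * g t * deriv g t / 4 : ℝ) : ℂ))
            * ψ t (x' - ε * g t) y z)) x
        = Complex.exp (Complex.I *
              ((ε * deriv g t * x / 2 - ε ^ 2 * g t * deriv g t / 4 : ℝ) : ℂ)) *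
            (Complex.I * ((ε * deriv g t * 1 / 2 : ℝ) : ℂ)) *
            (Complex.I * ((ε * deriv g t * 1 / 2 : ℝ) : ℂ)) * ψ t (x - ε * g t) y z
          + Complex.exp (Complex.I *
              ((ε * deriv g t * x / 2 - ε ^ 2 * g t * deriv g t / 4 : ℝ) : ℂ)) *
            (Complex.I * ((ε * deriv g t * 1 / 2 : ℝ) : ℂ)) *
            fderiv ℝ F (t, x - ε * g t, y, z) ex
          + (Complex.exp (Complex.I *
              ((ε * deriv g t * x / 2 - ε ^ 2 * g t * deriv g t / 4 : ℝ) : ℂ)) *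
            (Complex.I * ((ε * deriv g t * 1 / 2 : ℝ) : ℂ)) *
            fderiv ℝ F (t, x - ε * g t, y, z) ex
            + Complex.exp (Complex.I *
                ((ε * deriv g t * x / 2 - ε ^ 2 * g t * deriv g t / 4 : ℝ) : ℂ)) *
              fderiv ℝ (fun p : E4 => fderiv ℝ F p ex) (t, x - ε * g t, y, z) ex) := by
      rw [hDx1]
      have hphix : HasDerivAt (fun x' => ε * deriv g t * x' / 2 - ε ^ 2 * g t * deriv g t / 4)
          (ε * deriv g t * 1 / 2) x :=
        (((hasDerivAt_id x).const_mul (ε * deriv g t)).div_const 2).sub_const _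
      have hEx := ((hphix.ofReal_comp).const_mul Complex.I).cexp
      have hpsix : HasDerivAt (fun x' => ψ t (x' - ε * g t) y z)
          (fderiv ℝ F (t, x - ε * g t, y, z) ex) x :=
        HasDerivAt.comp_sub_const x (ε * g t) (sliceX hF t (x - ε * g t) y z)
      have hQx : HasDerivAt (fun u => fderiv ℝ F (t, u - ε * g t, y, z) ex)
          (fderiv ℝ (fun p : E4 => fderiv ℝ F p ex) (t, x - ε * g t, y, z) ex) x :=
        HasDerivAt.comp_sub_const x (ε * g t) (sliceX hGx t (x - ε * g t) y z)
      exact (((hEx.mul_const (Complex.I * ((ε * deriv g t * 1 / 2 : ℝ) : ℂ))).mul hpsix).add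
        (hEx.mul hQx)).deriv
    -- y and z second derivatives
    have hDy1 : deriv (fun y' => Complex.exp (Complex.I *
          ((ε * deriv g t * x / 2 - ε ^ 2 * g t * deriv g t / 4 : ℝ) : ℂ))
            * ψ t (x - ε * g t) y' z)
        = fun v => Complex.exp (Complex.I *
            ((ε * deriv g t * x / 2 - ε ^ 2 * g t * deriv g t / 4 : ℝ) : ℂ)) *
          fderiv ℝ F (t, x - ε * g t, v, z) ey :=
      funext fun v => (HasDerivAt.const_mul _ (sliceY hF t (x - ε * g t) v z)).deriv
    have eT3 : deriv (deriv (fun y' => Complex.exp (Complex.I *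
          ((ε * deriv g t * x / 2 - ε ^ 2 * g t * deriv g t / 4 : ℝ) : ℂ))
            * ψ t (x - ε * g t) y' z)) y
        = Complex.exp (Complex.I *
            ((ε * deriv g t * x / 2 - ε ^ 2 * g t * deriv g t / 4 : ℝ) : ℂ)) *
          fderiv ℝ (fun p : E4 => fderiv ℝ F p ey) (t, x - ε * g t, y, z) ey := by
      rw [hDy1]
      exact (HasDerivAt.const_mul _ (sliceY hGy t (x - ε * g t) y z)).deriv
    have hDz1 : deriv (fun z' => Complex.exp (Complex.I *
          ((ε * deriv g t * x / 2 - ε ^ 2 * g t * deriv g t / 4 : ℝ) : ℂ))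
            * ψ t (x - ε * g t) y z')
        = fun u => Complex.exp (Complex.I *
            ((ε * deriv g t * x / 2 - ε ^ 2 * g t * deriv g t / 4 : ℝ) : ℂ)) *
          fderiv ℝ F (t, x - ε * g t, y, u) ez :=
      funext fun u => (HasDerivAt.const_mul _ (sliceZ hF t (x - ε * g t) y u)).deriv
    have eT4 : deriv (deriv (fun z' => Complex.exp (Complex.I *
          ((ε * deriv g t * x / 2 - ε ^ 2 * g t * deriv g t / 4 : ℝ) : ℂ))
            * ψ t (x - ε * g t) y z')) z
        = Complex.exp (Complex.I *
            ((ε * deriv g t * x / 2 - ε ^ 2 * g t * deriv g t / 4 : ℝ) : ℂ)) *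
          fderiv ℝ (fun p : E4 => fderiv ℝ F p ez) (t, x - ε * g t, y, z) ez := by
      rw [hDz1]
      exact (HasDerivAt.const_mul _ (sliceZ hGz t (x - ε * g t) y z)).deriv
    have habs1 : ‖(Complex.exp (Complex.I *
          ((ε * deriv g t * x / 2 - ε ^ 2 * g t * deriv g t / 4 : ℝ) : ℂ))
            * ψ t (x - ε * g t) y z)‖
        = ‖ψ t (x - ε * g t) y z‖ := by
      have h1 : (Complex.I *
          ((ε * deriv g t * x / 2 - ε ^ 2 * g t * deriv g t / 4 : ℝ) : ℂ)).re = 0 := by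
        simp [← Complex.ofReal_pow]
      rw [norm_mul, Complex.norm_exp, h1, Real.exp_zero, one_mul]
    show Complex.I * deriv (fun t' => Complex.exp (Complex.I *
          ((ε * deriv g t' * x / 2 - ε ^ 2 * g t' * deriv g t' / 4 : ℝ) : ℂ))
            * ψ t' (x - ε * g t') y z) t
        + deriv (deriv (fun x' => Complex.exp (Complex.I *
          ((ε * deriv g t * x' / 2 - ε ^ 2 * g t * deriv g t / 4 : ℝ) : ℂ))
            * ψ t (x' - ε * g t) y z)) x
        + (a₁ : ℂ) * deriv (deriv (fun y' => Complex.exp (Complex.I *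
          ((ε * deriv g t * x / 2 - ε ^ 2 * g t * deriv g t / 4 : ℝ) : ℂ))
            * ψ t (x - ε * g t) y' z)) y
        + deriv (deriv (fun z' => Complex.exp (Complex.I *
          ((ε * deriv g t * x / 2 - ε ^ 2 * g t * deriv g t / 4 : ℝ) : ℂ))
            * ψ t (x - ε * g t) y z')) z
        = (a₂ : ℂ) * (‖Complex.exp (Complex.I *
            ((ε * deriv g t * x / 2 - ε ^ 2 * g t * deriv g t / 4 : ℝ) : ℂ))
              * ψ t (x - ε * g t) y z‖ : ℂ) ^ 2
            * (Complex.exp (Complex.I *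
              ((ε * deriv g t * x / 2 - ε ^ 2 * g t * deriv g t / 4 : ℝ) : ℂ))
                * ψ t (x - ε * g t) y z)
          + Complex.exp (Complex.I *
              ((ε * deriv g t * x / 2 - ε ^ 2 * g t * deriv g t / 4 : ℝ) : ℂ))
              * ψ t (x - ε * g t) y z
            * ((w t (x - ε * g t) y z - ε * deriv (deriv g) t * x / 2
                + ε ^ 2 * g t * deriv (deriv g) t / 4 : ℝ) : ℂ)
    rw [eT1, eT2, eT3, eT4, habs1]
    simp only [Complex.real_smul]
    set EE := Complex.exp (Complex.I *
      ((ε * deriv g t * x / 2 - ε ^ 2 * g t * deriv g t / 4 : ℝ) : ℂ)) with hEE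
    push_cast
    linear_combination (EE * ((ε : ℂ) * Complex.ofReal (deriv (deriv g) t) * (x : ℂ) / 2
        - ((ε : ℂ) ^ 2 * Complex.ofReal (deriv g t) * Complex.ofReal (deriv g t)
          + (ε : ℂ) ^ 2 * Complex.ofReal (g t) * Complex.ofReal (deriv (deriv g) t)) / 4
        + ((ε : ℂ) * Complex.ofReal (deriv g t) / 2) ^ 2) * ψ t (x - ε * g t) y z) * Complex.I_sq
      + EE * horig
  · -- second equation
    have horig := (hsol t (x - ε * g t) y z).2
    -- rewrite second derivatives of w in horig
    have ewx : deriv (fun x' => w t x' y z) = fun u => fderiv ℝ W (t, u, y, z) ex :=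
      funext fun u => (sliceX hW t u y z).deriv
    have ewy : deriv (fun y' => w t (x - ε * g t) y' z)
        = fun v => fderiv ℝ W (t, x - ε * g t, v, z) ey :=
      funext fun v => (sliceY hW t (x - ε * g t) v z).deriv
    have ewz : deriv (fun z' => w t (x - ε * g t) y z')
        = fun u => fderiv ℝ W (t, x - ε * g t, y, u) ez :=
      funext fun u => (sliceZ hW t (x - ε * g t) y u).deriv
    rw [ewx, ewy, ewz] at horig
    rw [(sliceX hWx t (x - ε * g t) y z).deriv, (sliceY hWy t (x - ε * g t) y z).deriv,
      (sliceZ hWz t (x - ε * g t) y z).deriv] at horig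
    -- compute second derivatives of the transformed w
    have h2x : deriv (deriv (fun x' => w t (x' - ε * g t) y z
          - ε * deriv (deriv g) t * x' / 2 + ε ^ 2 * g t * deriv (deriv g) t / 4)) x
        = fderiv ℝ (fun p : E4 => fderiv ℝ W p ex) (t, x - ε * g t, y, z) ex * 1 * 1 - 0 := by
      have e1 : deriv (fun x' => w t (x' - ε * g t) y z
            - ε * deriv (deriv g) t * x' / 2 + ε ^ 2 * g t * deriv (deriv g) t / 4)
          = fun u => fderiv ℝ W (t, u - ε * g t, y, z) ex * 1 - ε * deriv (deriv g) t * 1 / 2 := by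
        funext u
        have h1 : HasDerivAt (fun x' : ℝ => w t (x' - ε * g t) y z)
            (fderiv ℝ W (t, u - ε * g t, y, z) ex * 1) u :=
          by have := HasDerivAt.comp u (sliceX hW t (u - ε * g t) y z) ((hasDerivAt_id' u).sub_const (ε * g t)); exact this
        have h2 : HasDerivAt (fun x' : ℝ => ε * deriv (deriv g) t * x' / 2)
            (ε * deriv (deriv g) t * 1 / 2) u :=
          (((hasDerivAt_id u).const_mul (ε * deriv (deriv g) t)).div_const 2)
        exact ((h1.sub h2).add_const _).deriv
      rw [e1]
      have h3 : HasDerivAt (fun u : ℝ => fderiv ℝ W (t, u - ε * g t, y, z) ex * 1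
            - ε * deriv (deriv g) t * 1 / 2)
          (fderiv ℝ (fun p : E4 => fderiv ℝ W p ex) (t, x - ε * g t, y, z) ex * 1 * 1 - 0) x := by
        have h4 : HasDerivAt (fun u : ℝ => fderiv ℝ W (t, u - ε * g t, y, z) ex)
            (fderiv ℝ (fun p : E4 => fderiv ℝ W p ex) (t, x - ε * g t, y, z) ex * 1) x :=
          by have := HasDerivAt.comp x (sliceX hWx t (x - ε * g t) y z) ((hasDerivAt_id' x).sub_const (ε * g t)); exact this
        simpa using (h4.mul_const 1).sub_const (ε * deriv (deriv g) t * 1 / 2)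
      exact h3.deriv
    have h2y : deriv (deriv (fun y' => w t (x - ε * g t) y' z
          - ε * deriv (deriv g) t * x / 2 + ε ^ 2 * g t * deriv (deriv g) t / 4)) y
        = fderiv ℝ (fun p : E4 => fderiv ℝ W p ey) (t, x - ε * g t, y, z) ey := by
      have e1 : deriv (fun y' => w t (x - ε * g t) y' z
            - ε * deriv (deriv g) t * x / 2 + ε ^ 2 * g t * deriv (deriv g) t / 4)
          = fun v => fderiv ℝ W (t, x - ε * g t, v, z) ey := by
        funext v
        exact (((sliceY hW t (x - ε * g t) v z).sub_const _).add_const _).deriv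
      rw [e1]
      exact (sliceY hWy t (x - ε * g t) y z).deriv
    have h2z : deriv (deriv (fun z' => w t (x - ε * g t) y z'
          - ε * deriv (deriv g) t * x / 2 + ε ^ 2 * g t * deriv (deriv g) t / 4)) z
        = fderiv ℝ (fun p : E4 => fderiv ℝ W p ez) (t, x - ε * g t, y, z) ez := by
      have e1 : deriv (fun z' => w t (x - ε * g t) y z'
            - ε * deriv (deriv g) t * x / 2 + ε ^ 2 * g t * deriv (deriv g) t / 4)
          = fun u => fderiv ℝ W (t, x - ε * g t, y, u) ez := by
        funext u
        exact (((sliceZ hW t (x - ε * g t) y u).sub_const _).add_const _).deriv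
      rw [e1]
      exact (sliceZ hWz t (x - ε * g t) y z).deriv
    have habs : (fun y' => ‖
          (Complex.exp (Complex.I * ((ε * deriv g t * x / 2 - ε ^ 2 * g t * deriv g t / 4 : ℝ) : ℂ))
            * ψ t (x - ε * g t) y' z)‖ ^ 2)
        = fun y' => ‖ψ t (x - ε * g t) y' z‖ ^ 2 := by
      funext v
      have h1 : (Complex.I *
          ((ε * deriv g t * x / 2 - ε ^ 2 * g t * deriv g t / 4 : ℝ) : ℂ)).re = 0 := by
        simp [← Complex.ofReal_pow]
      rw [norm_mul, Complex.norm_exp, h1, Real.exp_zero, one_mul]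
    show deriv (deriv (fun x' => w t (x' - ε * g t) y z
          - ε * deriv (deriv g) t * x' / 2 + ε ^ 2 * g t * deriv (deriv g) t / 4)) x
        + b₁ * deriv (deriv (fun y' => w t (x - ε * g t) y' z
          - ε * deriv (deriv g) t * x / 2 + ε ^ 2 * g t * deriv (deriv g) t / 4)) y
        + deriv (deriv (fun z' => w t (x - ε * g t) y z'
          - ε * deriv (deriv g) t * x / 2 + ε ^ 2 * g t * deriv (deriv g) t / 4)) z
        = b₂ * deriv (deriv (fun y' => ‖
            (Complex.exp (Complex.I *
              ((ε * deriv g t * x / 2 - ε ^ 2 * g t * deriv g t / 4 : ℝ) : ℂ))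
              * ψ t (x - ε * g t) y' z)‖ ^ 2)) y
    rw [h2x, h2y, h2z, habs]
    linarith [horig]


end
end
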